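/- arXiv:2011.15088 — 7 statements merged into one kernel-verified Lean document; each statement's English description precedes it below -/
import Mathlib

section
/- For every integer i ≥ 2 with i ≠ 6, there exists a prime r such that the multiplicative order of 2 modulo r is exactly i (equivalently, r divides 2^i − 1 but r does not divide 2^j − 1 for any 1 ≤ j < i). -/
/-!
A prime `r ∣ Φ_i(2)` with `r ∤ i` has `ord_r 2 = i`. If instead `r ∣ i`, then
`i = r ^ k * ord_r 2` with `k ≥ 1` and `ord_r 2 ∣ r - 1`, so `r` is the largest prime factor of
`i`; moreover `r` is odd and, by lifting the exponent, divides `Φ_i(2)` exactly once. So if no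
prime has order `i`, then `Φ_i(2) = r`. But with `m = ord_r 2 ≥ 2` and `y = 2 ^ r ^ (k - 1)`,
`Φ_i(2) = Φ_{mr}(y) = Φ_m(y ^ r) / Φ_m(y) > ((y ^ r - 1) / (y + 1)) ^ φ(m) ≥ r`
unless `r = 3`, `k = 1`, i.e. `i = 6`.
-/

open Polynomial

theorem Nat.two_mul_le_two_pow_pow_pred {q j : ℕ} (hq : 2 ≤ q) (h : 4 ≤ q ∨ j ≠ 0) :
    2 * q ≤ (2 ^ q ^ j) ^ (q - 1) := by
  rcases h with hq4 | hj
  · calc 2 * q ≤ 2 ^ (q - 1) := by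
          obtain ⟨r, rfl⟩ := Nat.exists_eq_add_of_le' hq4
          have := Nat.lt_two_pow_self (n := r)
          rw [show r + 4 - 1 = r + 3 by omega, pow_add]
          omega
      _ ≤ (2 ^ q ^ j) ^ (q - 1) :=
          Nat.pow_le_pow_left (Nat.le_self_pow (pow_ne_zero j (by omega)) 2) _
  · calc 2 * q ≤ 2 ^ q := by
          have := Nat.lt_two_pow_self (n := q - 1)
          rw [← Nat.sub_add_cancel (by omega : 1 ≤ q), pow_succ]
          omega
      _ ≤ 2 ^ q ^ j := Nat.pow_le_pow_right two_pos (Nat.le_self_pow hj q)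
      _ ≤ (2 ^ q ^ j) ^ (q - 1) := Nat.le_self_pow (by omega) _

theorem Nat.le_of_forall_prime_dvd_eq {c p : ℕ} (hp : p.Prime) (hc : c ≠ 0)
    (h : ∀ r, r.Prime → r ∣ c → r = p) (hsq : ¬p ^ 2 ∣ c) : c ≤ p := by
  rw [Nat.eq_prime_pow_of_unique_prime_dvd hc fun hr hrc => h _ hr hrc] at hsq ⊢
  have hlen : c.primeFactorsList.length < 2 := lt_of_not_ge fun h2 => hsq (pow_dvd_pow p h2)
  calc p ^ c.primeFactorsList.length ≤ p ^ 1 := Nat.pow_le_pow_right hp.pos (by omega)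
    _ = p := pow_one p

namespace Polynomial

theorem isRoot_cyclotomic_zmod_iff_dvd {n q : ℕ} {a : ℤ} :
    (cyclotomic n (ZMod q)).IsRoot (a : ZMod q) ↔ (q : ℤ) ∣ (cyclotomic n ℤ).eval a := by
  rw [IsRoot.def, ← map_cyclotomic_int, eval_intCast_map, eq_intCast,
    ZMod.intCast_zmod_eq_zero_iff_dvd, Int.cast_id]

theorem cyclotomic_mul_dvd_geom_sum_X_pow {R : Type*} [CommRing R] [IsDomain R] {p s : ℕ}
    (hp : 1 < p) (hs : s ≠ 0) :
    cyclotomic (p * s) R ∣ ∑ j ∈ Finset.range p, (X ^ s) ^ j := by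
  have hmem : s ∈ (p * s).properDivisors :=
    Nat.mem_properDivisors.mpr ⟨dvd_mul_left s p, lt_mul_left (Nat.pos_of_ne_zero hs) hp⟩
  have hdvd := X_pow_sub_one_mul_cyclotomic_dvd_X_pow_sub_one_of_dvd R hmem
  rwa [mul_comm p s, pow_mul, ← geom_sum_mul (X ^ s), mul_comm _ (X ^ s - 1),
    mul_dvd_mul_iff_left (by simpa using X_pow_sub_C_ne_zero (Nat.pos_of_ne_zero hs) (1 : R)),
    mul_comm] at hdvd

theorem expand_cyclotomic_prime_mul {q : ℕ} (hq : q.Prime) (m k : ℕ) (R : Type*) [CommRing R] :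
    expand R (q ^ k) (cyclotomic (q * m) R) = cyclotomic (q ^ (k + 1) * m) R := by
  induction k with
  | zero => rw [pow_zero, expand_one, zero_add, pow_one]
  | succ k ih =>
    have hdvd : q ∣ q ^ (k + 1) * m := (dvd_pow_self q k.succ_ne_zero).mul_right m
    rw [pow_succ', expand_mul, ih, cyclotomic_expand_eq_cyclotomic hq hdvd, pow_succ _ (k + 1),
      mul_right_comm]

section PrimeDivisor

variable {n q : ℕ} [hq : Fact q.Prime] {a : ℤ}

theorem ne_zero_of_dvd_cyclotomic_eval (h : (q : ℤ) ∣ (cyclotomic n ℤ).eval a) : n ≠ 0 := by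
  rintro rfl
  rw [cyclotomic_zero, eval_one, Int.natCast_dvd_ofNat, Nat.dvd_one] at h
  exact hq.out.ne_one h

theorem orderOf_eq_ordCompl_of_dvd_cyclotomic_eval (h : (q : ℤ) ∣ (cyclotomic n ℤ).eval a) :
    orderOf (a : ZMod q) = ordCompl[q] n := by
  have hn := ne_zero_of_dvd_cyclotomic_eval h
  have : NeZero ((ordCompl[q] n : ℕ) : ZMod q) :=
    ⟨by rw [Ne, ZMod.natCast_eq_zero_iff]; exact Nat.not_dvd_ordCompl hq.out hn⟩
  rw [← isRoot_cyclotomic_zmod_iff_dvd, ← Nat.ordProj_mul_ordCompl_eq_self n q,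
    isRoot_cyclotomic_prime_pow_mul_iff_of_charP] at h
  exact h.eq_orderOf.symm

theorem orderOf_eq_of_dvd_cyclotomic_eval (h : (q : ℤ) ∣ (cyclotomic n ℤ).eval a)
    (hqn : ¬q ∣ n) : orderOf (a : ZMod q) = n := by
  rw [orderOf_eq_ordCompl_of_dvd_cyclotomic_eval h, Nat.factorization_eq_zero_of_not_dvd hqn,
    pow_zero, Nat.div_one]

theorem orderOf_ne_zero_of_dvd_cyclotomic_eval (h : (q : ℤ) ∣ (cyclotomic n ℤ).eval a) :
    orderOf (a : ZMod q) ≠ 0 := by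
  rw [orderOf_eq_ordCompl_of_dvd_cyclotomic_eval h]
  exact (Nat.ordCompl_pos q (ne_zero_of_dvd_cyclotomic_eval h)).ne'

theorem not_dvd_of_dvd_cyclotomic_eval (h : (q : ℤ) ∣ (cyclotomic n ℤ).eval a) :
    ¬(q : ℤ) ∣ a :=
  fun hqa => orderOf_ne_zero_of_dvd_cyclotomic_eval h <| by
    rw [(ZMod.intCast_zmod_eq_zero_iff_dvd a q).mpr hqa, orderOf_zero]

theorem orderOf_dvd_sub_one_of_dvd_cyclotomic_eval (h : (q : ℤ) ∣ (cyclotomic n ℤ).eval a) :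
    orderOf (a : ZMod q) ∣ q - 1 :=
  ZMod.orderOf_dvd_card_sub_one <| by
    rw [Ne, ZMod.intCast_zmod_eq_zero_iff_dvd a q]; exact not_dvd_of_dvd_cyclotomic_eval h

theorem le_of_prime_dvd_of_dvd_cyclotomic_eval (h : (q : ℤ) ∣ (cyclotomic n ℤ).eval a)
    {s : ℕ} (hs : s.Prime) (hsn : s ∣ n) : s ≤ q := by
  rw [← Nat.ordProj_mul_ordCompl_eq_self n q, ← orderOf_eq_ordCompl_of_dvd_cyclotomic_eval h]
    at hsn
  rcases (Nat.Prime.dvd_mul hs).mp hsn with hsq | hsm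
  · exact (Nat.prime_dvd_prime_iff_eq hs hq.out).mp (hs.dvd_of_dvd_pow hsq) |>.le
  · have := Nat.le_of_dvd (by have := hq.out.two_le; omega)
      (hsm.trans (orderOf_dvd_sub_one_of_dvd_cyclotomic_eval h))
    omega

theorem not_sq_dvd_cyclotomic_eval (hodd : Odd q) (h : (q : ℤ) ∣ (cyclotomic n ℤ).eval a)
    (hqn : q ∣ n) : ¬(q : ℤ) ^ 2 ∣ (cyclotomic n ℤ).eval a := by
  obtain ⟨s, rfl⟩ := hqn
  have hn := ne_zero_of_dvd_cyclotomic_eval h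
  have hord : orderOf (a : ZMod q) ∣ s := by
    have hcop : (orderOf (a : ZMod q)).Coprime q := by
      rw [orderOf_eq_ordCompl_of_dvd_cyclotomic_eval h, Nat.coprime_comm]
      exact Nat.coprime_ordCompl hq.out hn
    rw [← hcop.dvd_mul_left, orderOf_eq_ordCompl_of_dvd_cyclotomic_eval h]
    exact Nat.ordCompl_dvd _ _
  have hqs : (q : ℤ) ∣ a ^ s - 1 := by
    rw [← ZMod.intCast_zmod_eq_zero_iff_dvd, Int.cast_sub, Int.cast_pow, Int.cast_one,
      orderOf_dvd_iff_pow_eq_one.mp hord, sub_self]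
  have hq_not_dvd : ¬(q : ℤ) ∣ a ^ s := fun hdvd => by
    have : (q : ℤ) ∣ 1 := by simpa using dvd_sub hdvd hqs
    rw [Int.natCast_dvd_ofNat, Nat.dvd_one] at this
    exact hq.out.ne_one this
  have hgeom : (cyclotomic (q * s) ℤ).eval a ∣ ∑ j ∈ Finset.range q, (a ^ s) ^ j := by
    simpa [eval_finsetSum] using eval_dvd (x := a)
      (cyclotomic_mul_dvd_geom_sum_X_pow hq.out.one_lt (right_ne_zero_of_mul hn))
  have hmult := emultiplicity_geom_sum₂_eq_one (Nat.prime_iff_prime_int.mp hq.out) hodd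
    (by simpa using hqs) hq_not_dvd
  simp only [one_pow, mul_one] at hmult
  intro hsq
  have := le_emultiplicity_of_pow_dvd (hsq.trans hgeom)
  rw [hmult] at this
  norm_num at this

end PrimeDivisor

theorem prime_lt_eval_cyclotomic_mul_prime {q m y : ℕ} (hq : q.Prime) (hqm : ¬q ∣ m)
    (hm : 2 ≤ m) (hy : 2 ≤ y) (hqy : 2 * q ≤ y ^ (q - 1)) :
    (q : ℝ) < eval (y : ℝ) (cyclotomic (m * q) ℝ) := by
  have hy1 : (1 : ℝ) < y := by exact_mod_cast hy
  have hq1 : (1 : ℝ) ≤ q := by exact_mod_cast hq.one_lt.le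
  have hgap : (q : ℝ) * (y + 1) < (y : ℝ) ^ q - 1 := by
    have hsplit : y ^ q = y ^ (q - 1) * y := by rw [← pow_succ, Nat.sub_add_cancel hq.one_le]
    have : q * (y + 1) + 1 < y ^ q := by rw [hsplit]; nlinarith [hq.two_le]
    have : ((q * (y + 1) + 1 : ℕ) : ℝ) < ((y ^ q : ℕ) : ℝ) := by exact_mod_cast this
    push_cast at this
    linarith
  have ht : m.totient ≠ 0 := (Nat.totient_pos.mpr (by omega)).ne'
  have hexpand : eval (y : ℝ) (cyclotomic (m * q) ℝ) * eval (y : ℝ) (cyclotomic m ℝ) =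
      eval ((y : ℝ) ^ q) (cyclotomic m ℝ) := by
    rw [← eval_mul, ← cyclotomic_expand_eq_cyclotomic_mul hq hqm, expand_eval]
  refine lt_of_mul_lt_mul_right ?_ (cyclotomic_pos' m hy1).le
  calc (q : ℝ) * eval (y : ℝ) (cyclotomic m ℝ)
      ≤ (q : ℝ) ^ m.totient * ((y : ℝ) + 1) ^ m.totient := by
        gcongr
        · exact (cyclotomic_pos' m hy1).le
        · exact le_self_pow₀ hq1 ht
        · exact cyclotomic_eval_le_add_one_pow_totient hy1 m
    _ = ((q : ℝ) * (y + 1)) ^ m.totient := (mul_pow _ _ _).symm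
    _ < ((y : ℝ) ^ q - 1) ^ m.totient := by gcongr
    _ < eval ((y : ℝ) ^ q) (cyclotomic m ℝ) :=
        sub_one_pow_totient_lt_cyclotomic_eval hm (one_lt_pow₀ hy1 hq.ne_zero)
    _ = eval (y : ℝ) (cyclotomic (m * q) ℝ) * eval (y : ℝ) (cyclotomic m ℝ) := hexpand.symm

theorem prime_lt_cyclotomic_eval_two {n q : ℕ} [hq : Fact q.Prime]
    (h : (q : ℤ) ∣ (cyclotomic n ℤ).eval 2) (hqn : q ∣ n) (hn6 : n ≠ 6) :
    (q : ℤ) < (cyclotomic n ℤ).eval 2 := by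
  set m := orderOf ((2 : ℤ) : ZMod q) with hm_def
  have hn : n = q ^ n.factorization q * m := by
    rw [hm_def, orderOf_eq_ordCompl_of_dvd_cyclotomic_eval h, Nat.ordProj_mul_ordCompl_eq_self]
  obtain ⟨j, hj⟩ : ∃ j, n.factorization q = j + 1 := Nat.exists_eq_succ_of_ne_zero
    (hq.out.factorization_pos_of_dvd (ne_zero_of_dvd_cyclotomic_eval h) hqn).ne'
  rw [hj] at hn
  have hm2 : 2 ≤ m := by
    have h0 := orderOf_ne_zero_of_dvd_cyclotomic_eval h
    have h1 : m ≠ 1 := fun h1 => by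
      rw [orderOf_eq_one_iff, Int.cast_ofNat] at h1
      exact one_ne_zero (α := ZMod q) (by linear_combination h1)
    omega
  have hmq : m < q := by
    have := Nat.le_of_dvd (by have := hq.out.two_le; omega)
      (orderOf_dvd_sub_one_of_dvd_cyclotomic_eval h)
    omega
  set y := 2 ^ q ^ j with hy_def
  have hy : 2 ≤ y := Nat.le_self_pow (pow_ne_zero j hq.out.ne_zero) 2
  have hqy : 2 * q ≤ y ^ (q - 1) := Nat.two_mul_le_two_pow_pow_pred (by omega) <| by
    rcases j with _ | j
    · left
      have hq3 : q ≠ 3 := by rintro rfl; omega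
      omega
    · exact Or.inr j.succ_ne_zero
  have heval :
      (((cyclotomic n ℤ).eval 2 : ℤ) : ℝ) = eval (y : ℝ) (cyclotomic (m * q) ℝ) := by
    have h2 := cyclotomic.eval_apply (2 : ℤ) n (Int.castRingHom ℝ)
    simp only [eq_intCast, Int.cast_ofNat] at h2
    rw [← h2, hn, ← expand_cyclotomic_prime_mul hq.out, expand_eval, mul_comm q m, hy_def]
    push_cast
    rfl
  have key := prime_lt_eval_cyclotomic_mul_prime hq.out
    (Nat.not_dvd_of_pos_of_lt (by omega) hmq) hm2 hy hqy
  exact_mod_cast heval ▸ key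

end Polynomial

/-- **Zsigmondy, base 2.** For every integer `i ≥ 2` with `i ≠ 6`, there is a
prime `r` such that the multiplicative order of `2` modulo `r` is exactly `i`. -/
theorem zsigmondy_base_two (i : ℕ) (hi : 2 ≤ i) (hi6 : i ≠ 6) :
    ∃ r : ℕ, r.Prime ∧ orderOf (2 : ZMod r) = i := by
  by_contra! hno
  set e := (cyclotomic i ℤ).eval 2
  have hdvd : ∀ r : ℕ, r.Prime → (r : ℤ) ∣ e → r ∣ i := fun r hr hre => by
    have := Fact.mk hr
    by_contra hri
    exact hno r hr (by simpa using orderOf_eq_of_dvd_cyclotomic_eval hre hri)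
  have he1 : 1 < e.natAbs := by
    simpa using sub_one_lt_natAbs_cyclotomic_eval hi (q := 2) (by norm_num)
  obtain ⟨p, hp, hpe⟩ := Nat.exists_prime_and_dvd he1.ne'
  rw [← Int.ofNat_dvd_left] at hpe
  have := Fact.mk hp
  have hpi := hdvd p hp hpe
  have hunique : ∀ r : ℕ, r.Prime → r ∣ e.natAbs → r = p := fun r hr hre => by
    rw [← Int.ofNat_dvd_left] at hre
    have := Fact.mk hr
    exact le_antisymm (le_of_prime_dvd_of_dvd_cyclotomic_eval hpe hr (hdvd r hr hre))
      (le_of_prime_dvd_of_dvd_cyclotomic_eval hre hp hpi)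
  have hodd : Odd p := hp.odd_of_ne_two <| by
    rintro rfl; exact not_dvd_of_dvd_cyclotomic_eval hpe (by norm_num)
  have hsq : ¬p ^ 2 ∣ e.natAbs := by
    rw [← Int.ofNat_dvd_left, Nat.cast_pow]
    exact not_sq_dvd_cyclotomic_eval hodd hpe hpi
  have hle := Nat.le_of_forall_prime_dvd_eq hp (by omega) hunique hsq
  have hlt := prime_lt_cyclotomic_eval_two hpe hpi hi6
  omega
end

section
/- Let m > 5, n = 2^m, and L = SL_n(F_2). Let p and q be distinct odd primes such that, writing e(p,2) and e(q,2) for the multiplicative orders of 2 modulo p and modulo q respectively, one has 2^{m−1} < e(p,2) ≤ 2^m, 2^{m−1} < e(q,2) ≤ 2^m, and e(p,2) ≠ e(q,2). Then no element of L has order divisible by pq. -/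
open Polynomial

lemma exists_monic_irred_factor {K : Type*} [Field K] {μ h : K[X]}
    (hsq : Squarefree μ) (hμ0 : μ ≠ 0) (hnd : ¬ μ ∣ h) :
    ∃ f : K[X], f.Monic ∧ Irreducible f ∧ f ∣ μ ∧ ¬ f ∣ h := by
  classical
  obtain ⟨e, he⟩ : EuclideanDomain.gcd μ h ∣ μ := EuclideanDomain.gcd_dvd_left μ h
  have he0 : e ≠ 0 := by rintro rfl; rw [mul_zero] at he; exact hμ0 he
  have heu : ¬ IsUnit e := by
    intro hu
    obtain ⟨v, rfl⟩ := hu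
    have hassoc : Associated (EuclideanDomain.gcd μ h) μ := ⟨v, he.symm⟩
    exact hnd (hassoc.symm.dvd.trans (EuclideanDomain.gcd_dvd_right μ h))
  obtain ⟨f₀, hf₀irr, hf₀dvd⟩ := WfDvdMonoid.exists_irreducible_factor heu he0
  have hf₀0 : f₀ ≠ 0 := hf₀irr.ne_zero
  have heμ : e ∣ μ := ⟨EuclideanDomain.gcd μ h, by rw [mul_comm]; exact he⟩
  have hf₀μ : f₀ ∣ μ := hf₀dvd.trans heμ
  refine ⟨normalize f₀, monic_normalize hf₀0, (associated_normalize f₀).irreducible hf₀irr,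
    (normalize_dvd_iff).2 hf₀μ, ?_⟩
  rw [normalize_dvd_iff]
  intro hfh
  have hfd : f₀ ∣ EuclideanDomain.gcd μ h := EuclideanDomain.dvd_gcd hf₀μ hfh
  have : f₀ * f₀ ∣ μ := by rw [he]; exact mul_dvd_mul hfd hf₀dvd
  exact hf₀irr.not_isUnit (hsq f₀ this)

/-- For a monic irreducible `f` over `ZMod 2` dividing some `X^s - 1` with `s > 0`,
there is an `o` dividing `2 ^ deg f - 1` such that `f ∣ X^k - 1 ↔ o ∣ k`. -/
lemma adjoin_key (f : Polynomial (ZMod 2)) (hm : f.Monic) (hi : Irreducible f)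
    {s : ℕ} (hs : 0 < s) (hfs : f ∣ X ^ s - 1) :
    ∃ o : ℕ, o ∣ 2 ^ f.natDegree - 1 ∧ ∀ k, f ∣ X ^ k - 1 ↔ o ∣ k := by
  classical
  haveI : Fact (Irreducible f) := ⟨hi⟩
  have hf0 : f ≠ 0 := hm.ne_zero
  set E := AdjoinRoot f
  set lam : E := AdjoinRoot.root f with hlam
  have hroot : Polynomial.aeval lam f = 0 := by
    rw [AdjoinRoot.aeval_eq, AdjoinRoot.mk_self]
  -- key equivalence between divisibility and powers of lam
  have hiff : ∀ k : ℕ, f ∣ X ^ k - 1 ↔ lam ^ k = 1 := by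
    intro k
    constructor
    · rintro ⟨c, hc⟩
      have := congrArg (Polynomial.aeval lam) hc
      rw [map_mul, hroot, zero_mul, map_sub, map_pow, aeval_X, map_one] at this
      exact sub_eq_zero.mp this
    · intro hk
      have hmin : minpoly (ZMod 2) lam = f :=
        (minpoly.eq_of_irreducible_of_monic hi hroot hm).symm
      rw [← hmin]
      apply minpoly.dvd
      rw [map_sub, map_pow, aeval_X, map_one, hk, sub_self]
  -- lam is a unit
  have hlam1 : lam ^ s = 1 := (hiff s).1 hfs
  have hunit : IsUnit lam := by
    apply IsUnit.of_mul_eq_one (a := lam) (lam ^ (s - 1))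
    rw [← pow_succ']
    rwa [Nat.sub_add_cancel hs]
  -- finiteness
  let pb := AdjoinRoot.powerBasis hf0
  haveI : Fintype E := Module.fintypeOfFintype pb.basis
  have hcard : Fintype.card E = 2 ^ f.natDegree := by
    rw [Module.card_fintype pb.basis]
    simp [pb]
  refine ⟨orderOf hunit.unit, ?_, ?_⟩
  · have := orderOf_dvd_card (x := hunit.unit)
    rwa [Fintype.card_units, hcard] at this
  · intro k
    rw [hiff k]
    constructor
    · intro hk
      have : hunit.unit ^ k = 1 := by
        ext
        rw [Units.val_pow_eq_pow_val, IsUnit.unit_spec, Units.val_one]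
        exact hk
      exact orderOf_dvd_of_pow_eq_one this
    · intro hk
      have : hunit.unit ^ k = 1 := orderOf_dvd_iff_pow_eq_one.mp hk
      have := congrArg (Units.val) this
      rwa [Units.val_pow_eq_pow_val, IsUnit.unit_spec, Units.val_one] at this

/-- Let `m > 5`, `n = 2^m`, `L = SL_n(F₂)`.  If `p` and `q` are distinct odd
primes whose multiplicative orders `e(p,2)`, `e(q,2)` of `2` lie in `(2^(m-1), 2^m]` and are
distinct, then no element of `L` has order divisible by `p * q`. -/
theorem independence_in_Omega (m : ℕ) (hm : 5 < m) (p q : ℕ)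
    (hp : p.Prime) (hq : q.Prime) (hpodd : Odd p) (hqodd : Odd q) (hpq : p ≠ q)
    (hep : 2 ^ (m - 1) < orderOf (2 : ZMod p) ∧ orderOf (2 : ZMod p) ≤ 2 ^ m)
    (heq : 2 ^ (m - 1) < orderOf (2 : ZMod q) ∧ orderOf (2 : ZMod q) ≤ 2 ^ m)
    (hne : orderOf (2 : ZMod p) ≠ orderOf (2 : ZMod q)) :
    ∀ g : Matrix.SpecialLinearGroup (Fin (2 ^ m)) (ZMod 2), ¬ (p * q ∣ orderOf g) := by
  intro g hdvd
  classical
  set a := orderOf (2 : ZMod p) with ha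
  set b := orderOf (2 : ZMod q) with hb
  have h2m1 : 0 < 2 ^ (m - 1) := pow_pos (by norm_num) _
  have h2m : 2 ^ m = 2 * 2 ^ (m - 1) := by
    rw [← pow_succ']
    congr 1
    omega
  have hp2 : 2 ≤ p := hp.two_le
  have hq2 : 2 ≤ q := hq.two_le
  have hpq0 : 0 < p * q := by positivity
  have hplt : p < p * q := lt_mul_of_one_lt_right (by omega) (by omega)
  have hqlt : q < p * q := lt_mul_of_one_lt_left (by omega) (by omega)
  -- an element of order exactly p*q
  have ht0 : orderOf g ≠ 0 := (orderOf_pos g).ne'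
  set x := g ^ (orderOf g / (p * q)) with hxdef
  have hx : orderOf x = p * q := by
    rw [hxdef, orderOf_pow, Nat.gcd_eq_right (Nat.div_dvd_of_dvd hdvd),
      Nat.div_div_self hdvd ht0]
  -- pass to matrices
  set A : Matrix (Fin (2 ^ m)) (Fin (2 ^ m)) (ZMod 2) := x.val with hA
  have hApow : ∀ r : ℕ, A ^ r = 1 → p * q ∣ r := by
    intro r hr
    rw [← hx]
    apply orderOf_dvd_of_pow_eq_one
    exact Subtype.coe_injective (by simpa using hr)
  have hApq : A ^ (p * q) = 1 := by
    have hx1 : x ^ (p * q) = 1 := by rw [← hx]; exact pow_orderOf_eq_one x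
    rw [hA]
    have := congrArg Subtype.val hx1
    simpa using this
  -- the minimal polynomial
  have hAint : IsIntegral (ZMod 2) A :=
    ⟨A.charpoly, A.charpoly_monic, A.aeval_self_charpoly⟩
  set μ := minpoly (ZMod 2) A with hμ
  have hμ0 : μ ≠ 0 := minpoly.ne_zero hAint
  have hμdvd : μ ∣ X ^ (p * q) - 1 := by
    apply minpoly.dvd
    rw [map_sub, map_pow, aeval_X, map_one, hApq, sub_self]
  have hsq : Squarefree (X ^ (p * q) - 1 : (ZMod 2)[X]) := by
    have hcast : ((p * q : ℕ) : ZMod 2) ≠ 0 := by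
      rw [Ne, ZMod.natCast_eq_zero_iff]
      intro hdd
      have := Nat.odd_iff.mp (hpodd.mul hqodd)
      omega
    have := (separable_X_pow_sub_C (1 : ZMod 2) hcast one_ne_zero).squarefree
    rwa [Polynomial.C_1] at this
  have hμsq : Squarefree μ := hsq.squarefree_of_dvd hμdvd
  -- μ does not divide X^p - 1 nor X^q - 1
  have hnd : ∀ r : ℕ, ¬ p * q ∣ r → ¬ μ ∣ (X ^ r - 1) := by
    intro r hr hdd
    apply hr
    apply hApow
    obtain ⟨c, hc⟩ := hdd
    have h0 : Polynomial.aeval A (X ^ r - 1 : (ZMod 2)[X]) = 0 := by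
      rw [hc, map_mul, minpoly.aeval, zero_mul]
    rw [map_sub, map_pow, aeval_X, map_one] at h0
    exact sub_eq_zero.mp h0
  have hnp : ¬ μ ∣ (X ^ p - 1) := hnd p (fun h => absurd (Nat.le_of_dvd (by omega) h) (by omega))
  have hnq : ¬ μ ∣ (X ^ q - 1) := hnd q (fun h => absurd (Nat.le_of_dvd (by omega) h) (by omega))
  -- extract irreducible factors
  obtain ⟨f, hfm, hfi, hfμ, hfp⟩ := exists_monic_irred_factor hμsq hμ0 hnp
  obtain ⟨f', hfm', hfi', hfμ', hfq⟩ := exists_monic_irred_factor hμsq hμ0 hnq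
  obtain ⟨o, ho2, hoiff⟩ := adjoin_key f hfm hfi hpq0 (hfμ.trans hμdvd)
  obtain ⟨o', ho2', hoiff'⟩ := adjoin_key f' hfm' hfi' hpq0 (hfμ'.trans hμdvd)
  have hopq : o ∣ p * q := (hoiff _).1 (hfμ.trans hμdvd)
  have hopq' : o' ∣ p * q := (hoiff' _).1 (hfμ'.trans hμdvd)
  -- q divides o (since f ∤ X^p - 1)
  have hqo : q ∣ o := by
    by_contra hqo
    exact (fun h => hfp ((hoiff p).2 h))
      ((Nat.Coprime.dvd_of_dvd_mul_right ((hq.coprime_iff_not_dvd.2 hqo).symm) hopq))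
  have hpo' : p ∣ o' := by
    by_contra hpo
    exact (fun h => hfq ((hoiff' q).2 h))
      ((Nat.Coprime.dvd_of_dvd_mul_left ((hp.coprime_iff_not_dvd.2 hpo).symm) hopq'))
  -- translate divisibility of 2^d - 1 into divisibility of degrees
  have keylemma : ∀ (r d : ℕ), r.Prime → r ∣ 2 ^ d - 1 → orderOf (2 : ZMod r) ∣ d := by
    intro r d hr hrd
    apply orderOf_dvd_of_pow_eq_one
    have h1 : ((2 ^ d - 1 : ℕ) : ZMod r) = 0 := (ZMod.natCast_eq_zero_iff _ _).2 hrd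
    have h2 : (2 ^ d : ℕ) = (2 ^ d - 1) + 1 := by
      have : 1 ≤ 2 ^ d := Nat.one_le_two_pow
      omega
    calc (2 : ZMod r) ^ d = ((2 ^ d : ℕ) : ZMod r) := by push_cast; ring
      _ = ((2 ^ d - 1 : ℕ) : ZMod r) + 1 := by rw [h2]; push_cast; ring
      _ = 1 := by rw [h1, zero_add]
  have hbd : b ∣ f.natDegree := keylemma q _ hq (hqo.trans ho2)
  have had : a ∣ f'.natDegree := keylemma p _ hp (hpo'.trans ho2')
  -- degree bounds
  have hchar0 : (A.charpoly).natDegree = 2 ^ m := by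
    rw [Matrix.charpoly_natDegree_eq_dim, Fintype.card_fin]
  have hcharne : A.charpoly ≠ 0 := A.charpoly_monic.ne_zero
  have hdn : f.natDegree ≤ 2 ^ m := by
    have := Polynomial.natDegree_le_of_dvd (hfμ.trans (A.minpoly_dvd_charpoly)) hcharne
    rwa [hchar0] at this
  have hdpos : 0 < f.natDegree := hfi.natDegree_pos
  have hdpos' : 0 < f'.natDegree := hfi'.natDegree_pos
  by_cases hff : f = f'
  · -- same factor: its degree equals both a and b
    subst hff
    have hpo : p ∣ o := by
      by_contra hpo
      exact (fun h => hfq ((hoiff q).2 h))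
        (Nat.Coprime.dvd_of_dvd_mul_left ((hp.coprime_iff_not_dvd.2 hpo).symm) hopq)
    have hadf : a ∣ f.natDegree := keylemma p _ hp (hpo.trans ho2)
    have h1 : f.natDegree = b := Nat.eq_of_dvd_of_lt_two_mul hdpos.ne' hbd (by omega)
    have h2 : f.natDegree = a := Nat.eq_of_dvd_of_lt_two_mul hdpos.ne' hadf (by omega)
    exact hne (by omega)
  · have hnd' : ¬ f ∣ f' := fun hd =>
      hff (Polynomial.eq_of_monic_of_associated hfm hfm' (hfi.associated_of_dvd hfi' hd))
    have hcop : IsCoprime f f' := (hfi.coprime_iff_not_dvd).2 hnd'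
    have hmul : f * f' ∣ A.charpoly :=
      (hcop.mul_dvd hfμ hfμ').trans (A.minpoly_dvd_charpoly)
    have hsum : f.natDegree + f'.natDegree ≤ 2 ^ m := by
      have := Polynomial.natDegree_le_of_dvd hmul hcharne
      rwa [Polynomial.natDegree_mul hfm.ne_zero hfm'.ne_zero, hchar0] at this
    have h1 : b ≤ f.natDegree := Nat.le_of_dvd hdpos hbd
    have h2 : a ≤ f'.natDegree := Nat.le_of_dvd hdpos' had
    omega
end

section
/- Let m > 5, L = SL_{2^m}(F_2), R = L × L × L, and let G be a finite group with ω(G) = ω(R). If p_1, p_2, p_3, p_4 are four pairwise distinct primes such that the multiplicative orders e(p_i,2) of 2 modulo p_i are pairwise distinct and each satisfies 2^{m−1} < e(p_i,2) ≤ 2^m, then no element of G has order divisible by p_1 p_2 p_3 p_4. -/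
/-!
Two of the four primes, say `p` and `r`, divide the order of the same component
`A ∈ SL_{2^m}(𝔽₂)`, so a power `y` of `A` has order `p r`. Its minimal polynomial divides the
separable polynomial `X^{pr} - 1`, hence has irreducible factors `f`, `g` whose roots have order
divisible by `p`, resp. `r`; since these roots lie in `𝔽_{2^{deg f}}`, resp. `𝔽_{2^{deg g}}`,
we get `e(p,2) ∣ deg f` and `e(r,2) ∣ deg g`. If `f = g`, both `e(p,2)` and `e(r,2)` are divisors
of `deg f ≤ 2^m` larger than half of it, so they coincide; otherwise
`e(p,2) + e(r,2) ≤ deg f + deg g ≤ 2^m`.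
-/

open Polynomial

theorem exists_irreducible_dvd_not_dvd_of_squarefree {R : Type*} [CommMonoidWithZero R]
    [GCDMonoid R] [WfDvdMonoid R] {q r : R} (hq : Squarefree q) (hqr : ¬ q ∣ r) :
    ∃ f, Irreducible f ∧ f ∣ q ∧ ¬ f ∣ r := by
  obtain ⟨s, hs⟩ := gcd_dvd_left q r
  have hs0 : s ≠ 0 := by
    rintro rfl
    rw [mul_zero] at hs
    subst hs
    exact hqr (hq 0 (by simp)).dvd
  have hsu : ¬ IsUnit s := fun hu => by
    have := (associated_mul_unit_left (gcd q r) s hu).dvd.trans (gcd_dvd_right q r)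
    rw [← hs] at this
    exact hqr this
  obtain ⟨f, hf, hfs⟩ := WfDvdMonoid.exists_irreducible_factor hsu hs0
  have hfq : f ∣ q := hfs.trans (Dvd.intro_left _ hs.symm)
  refine ⟨f, hf, hfq, fun hfr => hf.not_isUnit (hq f ?_)⟩
  rw [hs]
  exact mul_dvd_mul (dvd_gcd hfq hfr) hfs

theorem AdjoinRoot.root_pow_eq_one_iff {R : Type*} [CommRing R] {f : R[X]} {k : ℕ} :
    root f ^ k = 1 ↔ f ∣ X ^ k - 1 := by
  rw [← mk_eq_zero, map_sub, map_pow, mk_X, map_one, sub_eq_zero]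

theorem minpoly.dvd_X_pow_sub_one_iff {F E : Type*} [Field F] [Ring E] [Algebra F E] {a : E}
    {k : ℕ} : minpoly F a ∣ X ^ k - 1 ↔ a ^ k = 1 := by
  rw [minpoly.dvd_iff, map_sub, map_pow, aeval_X, map_one, sub_eq_zero]

theorem Nat.Prime.dvd_orderOf_of_pow_div_ne_one {M : Type*} [Monoid M] {x : M} {N P : ℕ}
    (hP : P.Prime) (hPN : P ∣ N) (hx : x ^ N = 1) (hxP : x ^ (N / P) ≠ 1) : P ∣ orderOf x := by
  by_contra h
  refine hxP (orderOf_dvd_iff_pow_eq_one.mp ?_)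
  rw [← Nat.mul_div_cancel' hPN] at hx
  exact ((hP.coprime_iff_not_dvd.mpr h).symm).dvd_of_dvd_mul_left (orderOf_dvd_of_pow_eq_one hx)

theorem orderOf_natCast_dvd_of_dvd_pow_sub_one {P q d : ℕ} (hq : q ≠ 0) (h : P ∣ q ^ d - 1) :
    orderOf (q : ZMod P) ∣ d := by
  apply orderOf_dvd_of_pow_eq_one
  have h0 : ((q ^ d - 1 : ℕ) : ZMod P) = 0 := (ZMod.natCast_eq_zero_iff _ _).mpr h
  rwa [Nat.cast_sub (Nat.one_le_pow _ _ (Nat.pos_of_ne_zero hq)), sub_eq_zero, Nat.cast_pow,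
    Nat.cast_one] at h0

theorem exists_irreducible_dvd_minpoly_orderOf_dvd_natDegree {F E : Type*} [Field F] [Fintype F]
    [Ring E] [Algebra F E] {a : E} {P : ℕ} (hP : P.Prime) (hPa : P ∣ orderOf a)
    (ha : (orderOf a : F) ≠ 0) :
    ∃ f : F[X], Irreducible f ∧ f ∣ minpoly F a ∧
      orderOf (Fintype.card F : ZMod P) ∣ f.natDegree := by
  classical
  set N := orderOf a
  have hN : 0 < N := Nat.pos_of_ne_zero fun h => ha (by rw [h, Nat.cast_zero])
  have hdvd : minpoly F a ∣ X ^ N - 1 := minpoly.dvd_X_pow_sub_one_iff.mpr (pow_orderOf_eq_one a)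
  have hndvd : ¬ minpoly F a ∣ X ^ (N / P) - 1 := by
    rw [minpoly.dvd_X_pow_sub_one_iff]
    exact pow_ne_one_of_lt_orderOf (Nat.div_pos (Nat.le_of_dvd hN hPa) hP.pos).ne'
      (Nat.div_lt_self hN hP.one_lt)
  have hsf : Squarefree (minpoly F a) := by
    have hsep := separable_X_pow_sub_C (1 : F) ha one_ne_zero
    rw [map_one] at hsep
    exact hsep.squarefree.squarefree_of_dvd hdvd
  obtain ⟨f, hf, hfa, hfP⟩ := exists_irreducible_dvd_not_dvd_of_squarefree hsf hndvd
  have := Fact.mk hf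
  let pb := AdjoinRoot.powerBasis hf.ne_zero
  have : Module.Finite F (AdjoinRoot f) := pb.finite
  have : Finite (AdjoinRoot f) := Module.finite_of_finite F
  let : Fintype (AdjoinRoot f) := Fintype.ofFinite _
  have hroot : AdjoinRoot.root f ^ N = 1 := AdjoinRoot.root_pow_eq_one_iff.mpr (hfa.trans hdvd)
  have hroot0 : AdjoinRoot.root f ≠ 0 := fun h => by simp [h, hN.ne'] at hroot
  have hProot : P ∣ orderOf (AdjoinRoot.root f) :=
    hP.dvd_orderOf_of_pow_div_ne_one hPa hroot (mt AdjoinRoot.root_pow_eq_one_iff.mp hfP)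
  have hcard : Fintype.card (AdjoinRoot f) = Fintype.card F ^ f.natDegree := by
    rw [Module.card_eq_pow_finrank (K := F), pb.finrank, AdjoinRoot.powerBasis_dim]
  refine ⟨f, hf, hfa, orderOf_natCast_dvd_of_dvd_pow_sub_one (Fintype.card_ne_zero (α := F)) ?_⟩
  rw [← hcard]
  exact hProot.trans (orderOf_dvd_of_pow_eq_one (FiniteField.pow_card_sub_one_eq_one _ hroot0))

theorem natCast_ne_zero_of_orderOf_card_ne_zero {F : Type*} [Field F] [Fintype F] {P : ℕ}
    (hP : P.Prime) (h : orderOf (Fintype.card F : ZMod P) ≠ 0) : (P : F) ≠ 0 := by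
  intro hP0
  have hchar : ringChar F = P := (Nat.prime_dvd_prime_iff_eq (CharP.char_is_prime F _) hP).mp
    ((CharP.cast_eq_zero_iff F _ P).mp hP0)
  have hPF : P ∣ Fintype.card F :=
    hchar ▸ (CharP.cast_eq_zero_iff F _ _).mp (FiniteField.cast_card_eq_zero F)
  have : Nontrivial (ZMod P) := ZMod.nontrivial_iff.mpr hP.ne_one
  rw [(ZMod.natCast_eq_zero_iff _ _).mpr hPF] at h
  exact not_isUnit_zero (orderOf_ne_zero_iff.mp h).isUnit

theorem Matrix.natDegree_minpoly_le {K ι : Type*} [Field K] [Fintype ι] [DecidableEq ι]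
    (A : Matrix ι ι K) : (minpoly K A).natDegree ≤ Fintype.card ι :=
  (natDegree_le_of_dvd (minpoly_dvd_charpoly A) (charpoly_monic A).ne_zero).trans
    (charpoly_natDegree_eq_dim A).le

theorem exists_component_two_prime_dvd_orderOf {H : Type*} [Monoid H] {x : H × H × H}
    {p : Fin 4 → ℕ} (hp : ∀ i, (p i).Prime) (hpx : ∀ i, p i ∣ orderOf x) :
    ∃ y ∈ ({x.1, x.2.1, x.2.2} : Set H), ∃ i j, i ≠ j ∧ p i ∣ orderOf y ∧ p j ∣ orderOf y := by
  have hcomp : ∀ i, ∃ k : Fin 3, p i ∣ orderOf (![x.1, x.2.1, x.2.2] k) := by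
    intro i
    have h := hpx i
    rw [Prod.orderOf, Prod.orderOf, (hp i).dvd_lcm, (hp i).dvd_lcm] at h
    rcases h with h | h | h
    exacts [⟨0, h⟩, ⟨1, h⟩, ⟨2, h⟩]
  choose c hc using hcomp
  obtain ⟨i, j, hij, hcij⟩ := Fintype.exists_ne_map_eq_of_card_lt c (by simp)
  exact ⟨_, by generalize c i = k; fin_cases k <;> simp, i, j, hij, hc i, hcij ▸ hc j⟩

theorem Matrix.not_dvd_orderOf_and_dvd_orderOf {F ι : Type*} [Field F] [Fintype F] [Fintype ι]
    [DecidableEq ι] {A : Matrix ι ι F} (hA : IsOfFinOrder A) {p r : ℕ} (hp : p.Prime)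
    (hr : r.Prime) (hpr : orderOf (Fintype.card F : ZMod p) ≠ orderOf (Fintype.card F : ZMod r))
    (hcp : Fintype.card ι < 2 * orderOf (Fintype.card F : ZMod p))
    (hcr : Fintype.card ι < 2 * orderOf (Fintype.card F : ZMod r)) :
    ¬ (p ∣ orderOf A ∧ r ∣ orderOf A) := by
  rintro ⟨hpA, hrA⟩
  have hne : p ≠ r := by rintro rfl; exact hpr rfl
  set y := A ^ (orderOf A / (p * r))
  have hy : orderOf y = p * r := orderOf_pow_orderOf_div hA.orderOf_pos.ne'
    (((Nat.coprime_primes hp hr).mpr hne).mul_dvd_of_dvd_of_dvd hpA hrA)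
  have hyF : (orderOf y : F) ≠ 0 := by
    rw [hy, Nat.cast_mul]
    exact mul_ne_zero (natCast_ne_zero_of_orderOf_card_ne_zero hp (by omega))
      (natCast_ne_zero_of_orderOf_card_ne_zero hr (by omega))
  obtain ⟨f, hf, hfy, hpf⟩ :=
    exists_irreducible_dvd_minpoly_orderOf_dvd_natDegree hp (hy ▸ dvd_mul_right p r) hyF
  obtain ⟨g, hg, hgy, hrg⟩ :=
    exists_irreducible_dvd_minpoly_orderOf_dvd_natDegree hr (hy ▸ dvd_mul_left r p) hyF
  have hy0 : minpoly F y ≠ 0 := minpoly.ne_zero_of_finite F y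
  by_cases hfg : Associated f g
  · have hd : f.natDegree ≤ Fintype.card ι :=
      (natDegree_le_of_dvd hfy hy0).trans y.natDegree_minpoly_le
    rw [natDegree_eq_of_degree_eq (degree_eq_degree_of_associated hfg)] at hpf hd
    exact hpr ((Nat.eq_of_dvd_of_lt_two_mul hg.natDegree_pos.ne' hpf (by omega)).symm.trans
      (Nat.eq_of_dvd_of_lt_two_mul hg.natDegree_pos.ne' hrg (by omega)))
  · have hfg' : f * g ∣ minpoly F y :=
      (hf.coprime_iff_not_dvd.mpr fun h => hfg (hf.associated_of_dvd hg h)).mul_dvd hfy hgy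
    have hd := (natDegree_le_of_dvd hfg' hy0).trans y.natDegree_minpoly_le
    rw [natDegree_mul hf.ne_zero hg.ne_zero] at hd
    have := Nat.le_of_dvd hf.natDegree_pos hpf
    have := Nat.le_of_dvd hg.natDegree_pos hrg
    omega

theorem no_element_of_order_four_primes_general (m : ℕ)
    (G : Type*) [Group G]
    (hspec : {a : ℕ | ∃ g : G, orderOf g = a} =
      {a : ℕ | ∃ x : Matrix.SpecialLinearGroup (Fin (2 ^ m)) (ZMod 2) ×
        Matrix.SpecialLinearGroup (Fin (2 ^ m)) (ZMod 2) ×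
        Matrix.SpecialLinearGroup (Fin (2 ^ m)) (ZMod 2), orderOf x = a})
    (p : Fin 4 → ℕ) (hprime : ∀ i, (p i).Prime)
    (horder : ∀ i, 2 ^ (m - 1) < orderOf (2 : ZMod (p i)) ∧ orderOf (2 : ZMod (p i)) ≤ 2 ^ m)
    (hdist : ∀ i j, i ≠ j → orderOf (2 : ZMod (p i)) ≠ orderOf (2 : ZMod (p j))) :
    ∀ g : G, ¬ ((p 0 * p 1 * p 2 * p 3) ∣ orderOf g) := by
  intro g hg
  have hmem : orderOf g ∈ {a : ℕ | ∃ g : G, orderOf g = a} := ⟨g, rfl⟩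
  rw [hspec] at hmem
  obtain ⟨x, hx⟩ := hmem
  have hpx (i : Fin 4) : p i ∣ orderOf x :=
    (Fin.prod_univ_four p ▸ Finset.dvd_prod_of_mem p (Finset.mem_univ i)).trans (hx ▸ hg)
  obtain ⟨A, -, i, j, hij, hi, hj⟩ := exists_component_two_prime_dvd_orderOf hprime hpx
  rw [← orderOf_injective _ Matrix.SpecialLinearGroup.coeMonoidHom_injective A] at hi hj
  have hA : IsOfFinOrder (A : Matrix (Fin (2 ^ m)) (Fin (2 ^ m)) (ZMod 2)) :=
    Matrix.SpecialLinearGroup.coeMonoidHom.isOfFinOrder (isOfFinOrder_of_finite A)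
  have hcard2 (k : Fin 4) : ((Fintype.card (ZMod 2) : ℕ) : ZMod (p k)) = 2 := by
    rw [ZMod.card, Nat.cast_ofNat]
  have hdim (k : Fin 4) :
      Fintype.card (Fin (2 ^ m)) < 2 * orderOf ((Fintype.card (ZMod 2) : ℕ) : ZMod (p k)) := by
    rw [Fintype.card_fin, hcard2]
    calc 2 ^ m ≤ 2 * 2 ^ (m - 1) := by
          rw [← pow_succ']
          exact Nat.pow_le_pow_right two_pos (by omega)
      _ < 2 * orderOf (2 : ZMod (p k)) := by have := (horder k).1; omega
  have hd : orderOf ((Fintype.card (ZMod 2) : ℕ) : ZMod (p i)) ≠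
      orderOf ((Fintype.card (ZMod 2) : ℕ) : ZMod (p j)) := by
    rw [hcard2, hcard2]
    exact hdist i j hij
  exact Matrix.not_dvd_orderOf_and_dvd_orderOf hA (hprime i) (hprime j) hd (hdim i) (hdim j)
    ⟨hi, hj⟩

/-- Let `m > 5`, `L = SL_{2^m}(F₂)`, `R = L × L × L`, and let `G` be a finite
group with `ω(G) = ω(R)`.  If `p₀, p₁, p₂, p₃` are pairwise distinct primes whose
multiplicative orders `e(pᵢ, 2)` are pairwise distinct and all lie in `(2^(m-1), 2^m]`, then
no element of `G` has order divisible by `p₀ p₁ p₂ p₃`. -/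
theorem no_element_of_order_four_primes (m : ℕ) (hm : 5 < m)
    (G : Type*) [Group G] [Fintype G]
    (hspec : {a : ℕ | ∃ g : G, orderOf g = a} =
      {a : ℕ | ∃ x : Matrix.SpecialLinearGroup (Fin (2 ^ m)) (ZMod 2) ×
        Matrix.SpecialLinearGroup (Fin (2 ^ m)) (ZMod 2) ×
        Matrix.SpecialLinearGroup (Fin (2 ^ m)) (ZMod 2), orderOf x = a})
    (p : Fin 4 → ℕ) (hprime : ∀ i, (p i).Prime) (hinj : Function.Injective p)
    (horder : ∀ i, 2 ^ (m - 1) < orderOf (2 : ZMod (p i)) ∧ orderOf (2 : ZMod (p i)) ≤ 2 ^ m)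
    (hdist : ∀ i j, i ≠ j → orderOf (2 : ZMod (p i)) ≠ orderOf (2 : ZMod (p j))) :
    ∀ g : G, ¬ ((p 0 * p 1 * p 2 * p 3) ∣ orderOf g) :=
  no_element_of_order_four_primes_general m G hspec p hprime horder hdist
end

section
/- Let m > 5, n = 2^m, L = SL_n(F_2), R = L × L × L, and let G be a finite group with ω(G) = ω(R). Then for every odd integer q ≥ 3, the number q^{n/2} − 1 does not belong to ω(G). (Indeed, 2^{m+1} divides q^{2^{m−1}} − 1 for every odd q ≥ 3, while no element of R has order divisible by 2^{m+1}.) -/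
open Polynomial

/-- For odd `q`, `2^(k+2)` divides `q^(2^k) - 1` for all `k ≥ 1`. -/
lemma two_pow_dvd_int (q : ℤ) (hq : Odd q) :
    ∀ k : ℕ, 1 ≤ k → (2 : ℤ) ^ (k + 2) ∣ q ^ (2 ^ k) - 1 := by
  intro k hk
  induction k, hk using Nat.le_induction with
  | base =>
    obtain ⟨t, rfl⟩ := hq
    obtain ⟨r, hr⟩ := Int.even_mul_succ_self t
    exact ⟨r, by rw [show ((2*t+1)^(2^1) - 1 : ℤ) = 4 * (t * (t+1)) from by ring, hr]; ring⟩
  | succ k hk ih =>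
    have hsplit : q ^ (2 ^ (k+1)) - 1 = (q ^ (2 ^ k) - 1) * (q ^ (2 ^ k) + 1) := by
      rw [pow_succ, pow_mul]; ring
    have heven : (2 : ℤ) ∣ q ^ (2 ^ k) + 1 := (hq.pow.add_one).two_dvd
    rw [hsplit, pow_succ]
    exact mul_dvd_mul ih heven

/-- Any element of `SL_n(F₂)` with `n = 2^m` has order not divisible by `2^(m+1)`. -/
lemma sl_order_two_part (m : ℕ)
    (x : Matrix.SpecialLinearGroup (Fin (2 ^ m)) (ZMod 2)) :
    ¬ 2 ^ (m + 1) ∣ orderOf x := by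
  intro hdvd
  haveI : Nonempty (Fin (2 ^ m)) := ⟨⟨0, pow_pos two_pos m⟩⟩
  have hd : 0 < orderOf x := orderOf_pos x
  set d := orderOf x with hdef
  set k := d / 2 ^ (m + 1) with hkdef
  have hkd : k * 2 ^ (m + 1) = d := Nat.div_mul_cancel hdvd
  have hkpos : 0 < k := Nat.div_pos (Nat.le_of_dvd hd hdvd) (pow_pos two_pos _)
  have hkdvd : k ∣ d := ⟨2 ^ (m + 1), hkd.symm⟩
  set y := x ^ k with hydef
  have hoy : orderOf y = 2 ^ (m + 1) := by
    rw [hydef, orderOf_pow, ← hdef, Nat.gcd_eq_right hkdvd, ← hkd,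
      Nat.mul_div_cancel_left _ hkpos]
  have hy1 : y ^ (2 ^ (m + 1)) = 1 := by rw [← hoy]; exact pow_orderOf_eq_one y
  -- pass to matrices
  set Y : Matrix (Fin (2 ^ m)) (Fin (2 ^ m)) (ZMod 2) := (y : Matrix (Fin (2 ^ m)) (Fin (2 ^ m)) (ZMod 2)) with hYdef
  have hY1 : Y ^ (2 ^ (m + 1)) = 1 := by
    rw [hYdef, ← Matrix.SpecialLinearGroup.coe_pow, hy1, Matrix.SpecialLinearGroup.coe_one]
  have hcomm : Commute Y (1 : Matrix (Fin (2 ^ m)) (Fin (2 ^ m)) (ZMod 2)) := Commute.one_right Y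
  have hnil : IsNilpotent (Y + 1) := by
    refine ⟨2 ^ (m + 1), ?_⟩
    rw [add_pow_char_pow_of_commute _ _ hcomm, one_pow, hY1, CharTwo.add_self_eq_zero]
  -- nilpotent n×n matrix to the n-th power is zero, via charpoly
  have hcp : (Y + 1).charpoly = X ^ (2 ^ m) := by
    have h1 := Matrix.isNilpotent_charpoly_sub_pow_of_isNilpotent hnil
    have h2 : (Y + 1).charpoly - X ^ (Fintype.card (Fin (2 ^ m))) = 0 := h1.eq_zero
    rw [Fintype.card_fin] at h2
    exact sub_eq_zero.mp h2
  have hpow0 : (Y + 1) ^ (2 ^ m) = 0 := by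
    have h3 := Matrix.aeval_self_charpoly (Y + 1)
    rw [hcp] at h3
    simpa using h3
  have hYpow : Y ^ (2 ^ m) = 1 := by
    have h4 : Y = (Y + 1) + 1 := by
      rw [add_assoc, CharTwo.add_self_eq_zero, add_zero]
    calc Y ^ (2 ^ m) = ((Y + 1) + 1) ^ (2 ^ m) := by rw [← h4]
      _ = (Y + 1) ^ (2 ^ m) + 1 ^ (2 ^ m) :=
          add_pow_char_pow_of_commute _ _ (Commute.one_right _)
      _ = 1 := by rw [hpow0, one_pow, zero_add]
  have hy2 : y ^ (2 ^ m) = 1 := by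
    have hc : ((y ^ (2 ^ m) : Matrix.SpecialLinearGroup (Fin (2 ^ m)) (ZMod 2)) :
        Matrix (Fin (2 ^ m)) (Fin (2 ^ m)) (ZMod 2)) =
        ((1 : Matrix.SpecialLinearGroup (Fin (2 ^ m)) (ZMod 2)) :
        Matrix (Fin (2 ^ m)) (Fin (2 ^ m)) (ZMod 2)) := by
      rw [Matrix.SpecialLinearGroup.coe_pow, Matrix.SpecialLinearGroup.coe_one]
      exact hYpow
    exact Subtype.coe_injective hc
  have hdvd2 : 2 ^ (m + 1) ∣ 2 ^ m := hoy ▸ orderOf_dvd_of_pow_eq_one hy2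
  have hle := Nat.le_of_dvd (pow_pos two_pos m) hdvd2
  have hlt : (2 : ℕ) ^ m < 2 ^ (m + 1) := Nat.pow_lt_pow_right one_lt_two (Nat.lt_succ_self m)
  omega

/-- A power of a prime dividing an lcm divides one of the factors. -/
lemma prime_pow_dvd_lcm {p k a b : ℕ} (hp : p.Prime) (ha : a ≠ 0) (hb : b ≠ 0)
    (h : p ^ k ∣ Nat.lcm a b) : p ^ k ∣ a ∨ p ^ k ∣ b := by
  have hlcm : Nat.lcm a b ≠ 0 := Nat.lcm_ne_zero ha hb
  have h1 := (Nat.Prime.pow_dvd_iff_le_factorization hp hlcm).mp h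
  rw [Nat.factorization_lcm ha hb, Finsupp.sup_apply] at h1
  rcases le_max_iff.mp h1 with h2 | h2
  · exact Or.inl ((Nat.Prime.pow_dvd_iff_le_factorization hp ha).mpr h2)
  · exact Or.inr ((Nat.Prime.pow_dvd_iff_le_factorization hp hb).mpr h2)

/-- Let `m > 5`, `n = 2^m`, `L = SL_n(F₂)`, `R = L × L × L`, and let `G` be a
finite group with `ω(G) = ω(R)`.  Then for every odd `q ≥ 3`, the number `q^(n/2) - 1` is not
the order of any element of `G`. -/
theorem qk_not_in_spectrum (m : ℕ) (hm : 5 < m)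
    (G : Type*) [Group G] [Fintype G]
    (hspec : {a : ℕ | ∃ g : G, orderOf g = a} =
      {a : ℕ | ∃ x : Matrix.SpecialLinearGroup (Fin (2 ^ m)) (ZMod 2) ×
        Matrix.SpecialLinearGroup (Fin (2 ^ m)) (ZMod 2) ×
        Matrix.SpecialLinearGroup (Fin (2 ^ m)) (ZMod 2), orderOf x = a}) :
    ∀ q : ℕ, Odd q → 3 ≤ q → ∀ g : G, orderOf g ≠ q ^ (2 ^ m / 2) - 1 := by
  intro q hqodd hq3 g hg
  obtain ⟨m', rfl⟩ : ∃ m', m = m' + 1 := ⟨m - 1, by omega⟩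
  have hexp : 2 ^ (m' + 1) / 2 = 2 ^ m' := by
    rw [pow_succ, Nat.mul_div_cancel _ two_pos]
  -- the key divisibility: 2^(m+2) ∣ q^(2^m') - 1
  have hq1 : 1 ≤ q ^ (2 ^ m') := Nat.one_le_pow _ _ (by omega)
  have hdvdN : 2 ^ (m' + 1 + 1) ∣ q ^ (2 ^ m') - 1 := by
    have hint := two_pow_dvd_int (q : ℤ) (Int.odd_coe_nat q |>.mpr hqodd) m' (by omega)
    have hcast : ((q ^ (2 ^ m') - 1 : ℕ) : ℤ) = (q : ℤ) ^ (2 ^ m') - 1 := by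
      push_cast [Nat.cast_sub hq1]; ring
    have h : ((2 : ℕ) : ℤ) ^ (m' + 1 + 1) ∣ ((q ^ (2 ^ m') - 1 : ℕ) : ℤ) := by
      rw [hcast]; exact_mod_cast hint
    exact_mod_cast h
  rw [hexp] at hg
  -- transport to R via the spectrum equality
  have hmem : q ^ (2 ^ m') - 1 ∈ {a : ℕ | ∃ g : G, orderOf g = a} := ⟨g, hg⟩
  rw [hspec] at hmem
  obtain ⟨x, hx⟩ := hmem
  rw [Prod.orderOf, Prod.orderOf] at hx
  haveI : Nonempty (Fin (2 ^ (m' + 1))) := ⟨⟨0, pow_pos two_pos _⟩⟩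
  have h1 : orderOf x.1 ≠ 0 := (orderOf_pos x.1).ne'
  have h2 : orderOf x.2.1 ≠ 0 := (orderOf_pos x.2.1).ne'
  have h3 : orderOf x.2.2 ≠ 0 := (orderOf_pos x.2.2).ne'
  have hdvd : 2 ^ (m' + 1 + 1) ∣
      Nat.lcm (orderOf x.1) (Nat.lcm (orderOf x.2.1) (orderOf x.2.2)) := hx ▸ hdvdN
  rcases prime_pow_dvd_lcm Nat.prime_two h1 (Nat.lcm_ne_zero h2 h3) hdvd with h | h
  · exact sl_order_two_part (m' + 1) x.1 h
  · rcases prime_pow_dvd_lcm Nat.prime_two h2 h3 h with h | h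
    · exact sl_order_two_part (m' + 1) x.2.1 h
    · exact sl_order_two_part (m' + 1) x.2.2 h
end

section
/- Let G be a finite group, p a prime, and N a normal subgroup of G that is an elementary abelian p-group (i.e., N is abelian and every nontrivial element of N has order p). Let K = G/N, let φ : K → Aut(N) be the action induced by conjugation of G on N (well-defined since N is abelian), and let G_1 = N ⋊_φ K be the corresponding semidirect product. Then ω(G_1) ⊆ ω(G); that is, the order of every element of G_1 is the order of some element of G. -/
/-- **Zavarnitsine–Mazurov.** Let `G` be a finite group, `p` a prime, and `N` a
normal elementary abelian `p`-subgroup of `G`.  Let `K = G/N` act on `N` via the action `φ`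
induced by conjugation, and let `G₁ = N ⋊[φ] K`.  Then `ω(G₁) ⊆ ω(G)`. -/
theorem spectrum_of_split_extension (G : Type*) [Group G] [Fintype G] (p : ℕ) (hp : p.Prime)
    (N : Subgroup G) (hN : N.Normal)
    (habelian : ∀ x y : N, x * y = y * x)
    (helem : ∀ x : N, x ≠ 1 → orderOf x = p)
    (φ : G ⧸ N →* MulAut N)
    (hφ : ∀ (g : G) (x : N), ((φ ((g : G ⧸ N)) x : N) : G) = g * (x : G) * g⁻¹) :
    ∀ a : ℕ, (∃ y : N ⋊[φ] (G ⧸ N), orderOf y = a) → ∃ g : G, orderOf g = a := by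
  rintro a ⟨y, rfl⟩
  -- every element of N has p-th power 1
  have hNp : ∀ x : N, (x : G) ^ p = 1 := by
    intro x
    by_cases hx : x = 1
    · simp [hx]
    · have : x ^ p = 1 := by rw [← helem x hx]; exact pow_orderOf_eq_one x
      exact_mod_cast congrArg (Subtype.val) this
  set n : N := y.left with hn
  set k : G ⧸ N := y.right with hk
  set m : ℕ := orderOf k with hm
  have hm0 : 0 < m := orderOf_pos k
  -- divisor lemma
  have hdiv : ∀ b : ℕ, m ∣ b → b ∣ m * p → b = m ∨ b = m * p := by
    rintro b ⟨c, rfl⟩ h2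
    have hc : c ∣ p := (mul_dvd_mul_iff_left hm0.ne').mp h2
    rcases (Nat.Prime.eq_one_or_self_of_dvd hp c hc) with h | h
    · left; rw [h, mul_one]
    · right; rw [h]
  -- y^m = inl c
  set c : N := (y ^ m).left with hc
  have hyright : ∀ j : ℕ, (y ^ j).right = k ^ j := by
    intro j
    have := map_pow (SemidirectProduct.rightHom (φ := φ)) y j
    simpa using this
  have hym : y ^ m = SemidirectProduct.inl c := by
    ext
    · rfl
    · show (y ^ m).right = 1
      rw [hyright m]
      exact pow_orderOf_eq_one k
  -- orderOf y = m or m * p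
  have hmy : m ∣ orderOf y := by
    simpa [← hk] using orderOf_map_dvd (SemidirectProduct.rightHom (φ := φ)) y
  have hymp : orderOf y ∣ m * p := by
    apply orderOf_dvd_of_pow_eq_one
    rw [pow_mul, hym, ← map_pow]
    have : c ^ p = 1 := by
      have := hNp c
      ext
      simpa using this
    rw [this, map_one]
  -- any element of G mapping to k has order m or m*p
  have hlift : ∀ h : G, (h : G ⧸ N) = k → orderOf h = m ∨ orderOf h = m * p := by
    intro h hh
    have hhm : h ^ m ∈ N := by
      rw [← QuotientGroup.eq_one_iff, QuotientGroup.mk_pow, hh]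
      exact pow_orderOf_eq_one k
    apply hdiv
    · have : orderOf ((h : G ⧸ N)) ∣ orderOf h :=
        orderOf_map_dvd (QuotientGroup.mk' N) h
      rwa [hh] at this
    · apply orderOf_dvd_of_pow_eq_one
      rw [pow_mul]
      exact hNp ⟨h ^ m, hhm⟩
  set g : G := k.out with hg
  have hgk : (g : G ⧸ N) = k := QuotientGroup.out_eq' k
  -- the key power formula
  have key : ∀ j : ℕ, ((n : G) * g) ^ j = ((y ^ j).left : G) * g ^ j := by
    intro j
    induction j with
    | zero => simp
    | succ j ih =>
      have hyj : y = ⟨n, (g : G ⧸ N)⟩ := by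
        rw [hgk]
      have hleft : (y ^ (j + 1)).left = (y ^ j).left * φ ((g : G ⧸ N) ^ j) n := by
        conv_lhs => rw [hyj, pow_succ, SemidirectProduct.mul_left]
        rw [← hyj, hyright j, hgk]
      have hconj : ((φ ((g ^ j : G) : G ⧸ N) n : N) : G) = g ^ j * (n : G) * (g ^ j)⁻¹ :=
        hφ (g ^ j) n
      rw [QuotientGroup.mk_pow] at hconj
      rw [pow_succ, ih, hleft, pow_succ]
      push_cast
      rw [hconj]
      group
  rcases hdiv (orderOf y) hmy hymp with ha | ha
  · -- orderOf y = m : find element of order m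
    rcases hlift g hgk with hg1 | hg1
    · exact ⟨g, by rw [hg1, ha]⟩
    · refine ⟨g ^ p, ?_⟩
      rw [orderOf_pow, hg1, Nat.gcd_eq_right (dvd_mul_left p m), Nat.mul_div_cancel _ hp.pos, ha]
  · -- orderOf y = m * p
    rcases hlift g hgk with hg1 | hg1
    swap
    · exact ⟨g, by rw [hg1, ha]⟩
    · -- orderOf g = m, so g^m = 1; use h = n * g
      have hgm1 : g ^ m = 1 := by rw [← hg1]; exact pow_orderOf_eq_one g
      set h : G := (n : G) * g with hh
      have hhk : (h : G ⧸ N) = k := by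
        have hn1 : ((n : G) : G ⧸ N) = 1 := (QuotientGroup.eq_one_iff _).mpr n.2
        rw [hh, QuotientGroup.mk_mul, hn1, one_mul, hgk]
      rcases hlift h hhk with hh1 | hh1
      · -- h^m = c must be 1, contradiction with orderOf y = m*p
        exfalso
        have hhm : h ^ m = 1 := by rw [← hh1]; exact pow_orderOf_eq_one h
        have : (c : G) = 1 := by
          have := key m
          rw [hhm, hgm1, mul_one] at this
          exact this.symm
        have hc1 : c = 1 := by ext; simpa using this
        have : y ^ m = 1 := by rw [hym, hc1, map_one]
        have hdd : orderOf y ∣ m := orderOf_dvd_of_pow_eq_one this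
        rw [ha] at hdd
        have := Nat.le_of_dvd hm0 hdd
        nlinarith [hp.two_le]
      · exact ⟨h, by rw [hh1, ha]⟩
end

section
/- Let F be a finite field with |F| = q, let n ≥ 2, and suppose r is a prime such that the multiplicative order of q modulo r equals n (i.e., r is a primitive prime divisor of q^n − 1). Then the simple group L_n(q) = SL_n(F)/Z(SL_n(F)) contains a Frobenius subgroup with kernel of order r and cyclic complement of order n; that is, it contains a subgroup isomorphic to a semidirect product (Z/rZ) ⋊_φ (Z/nZ) where φ : Z/nZ → Aut(Z/rZ) is an injective homomorphism. -/
open Matrix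

private def zmodPowHom {G : Type*} [Group G] (m : ℕ) [NeZero m] (g : G) (h : g ^ m = 1) :
    Multiplicative (ZMod m) →* G where
  toFun x := g ^ (Multiplicative.toAdd x).val
  map_one' := by simp
  map_mul' x y := by
    have hv : (Multiplicative.toAdd (x * y)).val
        = ((Multiplicative.toAdd x).val + (Multiplicative.toAdd y).val) % m := by
      rw [toAdd_mul]; exact ZMod.val_add _ _
    simp only [hv, ← pow_eq_pow_mod _ h, pow_add]

private lemma zmodPowHom_apply {G : Type*} [Group G] (m : ℕ) [NeZero m] (g : G) (h : g ^ m = 1)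
    (x : Multiplicative (ZMod m)) : zmodPowHom m g h x = g ^ (Multiplicative.toAdd x).val := rfl

private def unitsToMulAut (r : ℕ) : (ZMod r)ˣ →* MulAut (Multiplicative (ZMod r)) where
  toFun u := AddEquiv.toMultiplicative (DistribMulAction.toAddAut (ZMod r)ˣ (ZMod r) u)
  map_one' := by
    ext x
    show Multiplicative.ofAdd ((1 : (ZMod r)ˣ) • Multiplicative.toAdd x) = x
    rw [one_smul]; rfl
  map_mul' u v := by
    ext x
    show Multiplicative.ofAdd ((u * v) • Multiplicative.toAdd x) = _
    rw [mul_smul]; rfl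

private lemma unitsToMulAut_apply (r : ℕ) (u : (ZMod r)ˣ) (x : Multiplicative (ZMod r)) :
    unitsToMulAut r u x = Multiplicative.ofAdd ((u : ZMod r) * Multiplicative.toAdd x) := rfl

private lemma conj_pow_iter {G : Type*} [Group G] {a b : G} {q : ℕ}
    (h : b * a * b⁻¹ = a ^ q) (j : ℕ) : b ^ j * a * (b ^ j)⁻¹ = a ^ q ^ j := by
  induction j with
  | zero => simp
  | succ j ih =>
    have h1 : b ^ (j + 1) * a * (b ^ (j + 1))⁻¹ = b * (b ^ j * a * (b ^ j)⁻¹) * b⁻¹ := by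
      group
    rw [h1, ih, ← conj_pow, h, ← pow_mul, ← pow_succ']

private theorem frobenius_subgroup_abstract {P : Type*} [Group P] (q n r : ℕ)
    (hn : 2 ≤ n) (hr : r.Prime) (horder : orderOf (q : ZMod r) = n)
    (a b : P) (ha : a ^ r = 1) (ha1 : a ≠ 1) (hb : b ^ n = 1) (hrel : b * a * b⁻¹ = a ^ q) :
    ∃ φ : Multiplicative (ZMod n) →* MulAut (Multiplicative (ZMod r)),
      Function.Injective φ ∧
      ∃ H : Subgroup P,
        Nonempty (H ≃* (Multiplicative (ZMod r) ⋊[φ] Multiplicative (ZMod n))) := by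
  haveI : Fact r.Prime := ⟨hr⟩
  haveI : NeZero n := ⟨by omega⟩
  have horda : orderOf a = r := orderOf_eq_prime ha ha1
  -- the unit `q` in `ZMod r`
  have hqn1 : (q : ZMod r) ^ n = 1 := by rw [← horder]; exact pow_orderOf_eq_one _
  have hq0 : (q : ZMod r) ≠ 0 := by
    intro h0
    rw [h0] at hqn1
    rw [zero_pow (by omega : n ≠ 0)] at hqn1
    exact zero_ne_one hqn1
  have hqord : ∀ j : ℕ, (q : ZMod r) ^ j = 1 ↔ n ∣ j := by
    intro j
    rw [← horder]
    exact ⟨fun h => orderOf_dvd_of_pow_eq_one h, fun h => orderOf_dvd_iff_pow_eq_one.mp h⟩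
  obtain ⟨uq, huq⟩ : ∃ u : (ZMod r)ˣ, (u : ZMod r) = (q : ZMod r) := ⟨hq0.isUnit.unit, rfl⟩
  have huqn : uq ^ n = 1 := by
    ext
    push_cast [huq]
    exact hqn1
  set φ : Multiplicative (ZMod n) →* MulAut (Multiplicative (ZMod r)) :=
    (unitsToMulAut r).comp (zmodPowHom n uq huqn) with hφ
  have hφapply : ∀ (g : Multiplicative (ZMod n)) (x : Multiplicative (ZMod r)),
      φ g x = Multiplicative.ofAdd
        ((q : ZMod r) ^ (Multiplicative.toAdd g).val * Multiplicative.toAdd x) := by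
    intro g x
    rw [hφ]
    simp only [MonoidHom.comp_apply, zmodPowHom_apply, unitsToMulAut_apply]
    rw [Units.val_pow_eq_pow_val, huq]
  have hφinj : Function.Injective φ := by
    rw [injective_iff_map_eq_one]
    intro g hg
    have h1 : φ g (Multiplicative.ofAdd (1 : ZMod r)) = Multiplicative.ofAdd (1 : ZMod r) := by
      rw [hg]; rfl
    rw [hφapply] at h1
    simp only [toAdd_ofAdd, mul_one] at h1
    have h2 : (q : ZMod r) ^ (Multiplicative.toAdd g).val = 1 := by
      have := congrArg Multiplicative.toAdd h1
      simpa using this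
    have h3 : n ∣ (Multiplicative.toAdd g).val := (hqord _).mp h2
    have h4 : (Multiplicative.toAdd g).val = 0 :=
      Nat.eq_zero_of_dvd_of_lt h3 (ZMod.val_lt _)
    have h5 : Multiplicative.toAdd g = 0 := by
      rwa [ZMod.val_eq_zero] at h4
    rw [← ofAdd_toAdd g, h5]; rfl
  refine ⟨φ, hφinj, ?_⟩
  -- the two homomorphisms
  haveI : NeZero r := ⟨hr.ne_zero⟩
  set fN : Multiplicative (ZMod r) →* P := zmodPowHom r a ha with hfN
  set fG : Multiplicative (ZMod n) →* P := zmodPowHom n b hb with hfG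
  have hconj : ∀ j : ℕ, b ^ j * a * (b ^ j)⁻¹ = a ^ q ^ j := conj_pow_iter hrel
  have compat : ∀ g : Multiplicative (ZMod n),
      fN.comp (φ g).toMonoidHom = (MulAut.conj (fG g)).toMonoidHom.comp fN := by
    intro g
    refine MonoidHom.ext fun x => ?_
    simp only [MonoidHom.comp_apply, MulEquiv.coe_toMonoidHom]
    rw [hφapply]
    set gv := (Multiplicative.toAdd g).val
    set xA := Multiplicative.toAdd x
    rw [hfN, hfG]
    simp only [zmodPowHom_apply, toAdd_ofAdd, MulAut.conj_apply]
    have hRH : b ^ gv * a ^ xA.val * (b ^ gv)⁻¹ = a ^ (q ^ gv * xA.val) := by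
      rw [← conj_pow, hconj gv, ← pow_mul]
    rw [hRH]
    rw [pow_eq_pow_iff_modEq, horda, ← ZMod.natCast_eq_natCast_iff]
    push_cast
    rw [ZMod.natCast_val, ZMod.cast_id, ZMod.natCast_val, ZMod.cast_id]
  set L := SemidirectProduct.lift fN fG compat with hL
  have hLinj : Function.Injective L := by
    rw [injective_iff_map_eq_one]
    intro g hg
    have hgdecomp : g = SemidirectProduct.inl g.left * SemidirectProduct.inr g.right :=
      (SemidirectProduct.inl_left_mul_inr_right g).symm
    rw [hgdecomp, _root_.map_mul] at hg
    rw [hL, SemidirectProduct.lift_inl, SemidirectProduct.lift_inr] at hg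
    set xv := (Multiplicative.toAdd g.left).val with hxv
    set yv := (Multiplicative.toAdd g.right).val with hyv
    rw [hfN, hfG] at hg
    simp only [zmodPowHom_apply] at hg
    -- a ^ xv * b ^ yv = 1
    have hby : b ^ yv = (a ^ xv)⁻¹ := eq_inv_of_mul_eq_one_right hg
    have hconj2 : a ^ q ^ yv = a := by
      rw [← hconj yv, hby]
      group
    have hdvd : n ∣ yv := by
      rw [← hqord]
      have : a ^ q ^ yv = a ^ 1 := by rwa [pow_one]
      rw [pow_eq_pow_iff_modEq, horda] at this
      rw [← ZMod.natCast_eq_natCast_iff] at this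
      push_cast at this
      exact this
    have hyv0 : yv = 0 := Nat.eq_zero_of_dvd_of_lt hdvd (ZMod.val_lt _)
    have hgright : g.right = 1 := by
      have : Multiplicative.toAdd g.right = 0 := by rwa [ZMod.val_eq_zero] at hyv0
      rw [← ofAdd_toAdd g.right, this]; rfl
    have hax : a ^ xv = 1 := by
      have h' : a ^ xv * b ^ yv = 1 := hg
      rwa [hyv0, pow_zero, mul_one] at h'
    have hxdvd : r ∣ xv := horda ▸ orderOf_dvd_of_pow_eq_one hax
    have hxv0 : xv = 0 := Nat.eq_zero_of_dvd_of_lt hxdvd (ZMod.val_lt _)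
    have hgleft : g.left = 1 := by
      have : Multiplicative.toAdd g.left = 0 := by rwa [ZMod.val_eq_zero] at hxv0
      rw [← ofAdd_toAdd g.left, this]; rfl
    ext
    · rw [hgleft]; rfl
    · rw [hgright]; rfl
  exact ⟨L.range, ⟨(MonoidHom.ofInjective hLinj).symm⟩⟩

open Polynomial in
private lemma fixed_mem_range {F K : Type*} [Field F] [Fintype F] [Field K] [Fintype K]
    [Algebra F K] [DecidableEq K] (x : K) (hx : x ^ Fintype.card F = x) :
    ∃ c : F, algebraMap F K c = x := by
  set q := Fintype.card F with hq
  have hq1 : 1 < q := Fintype.one_lt_card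
  set P : K[X] := X ^ q - X with hP
  have hdeg : P.natDegree = q := FiniteField.X_pow_card_sub_X_natDegree_eq K hq1
  have hP0 : P ≠ 0 := by
    intro h
    rw [h, natDegree_zero] at hdeg
    omega
  set S := P.roots.toFinset with hS
  set T := Finset.univ.image (algebraMap F K) with hT
  have hsub : T ⊆ S := by
    intro y hy
    rw [hT, Finset.mem_image] at hy
    obtain ⟨c, -, rfl⟩ := hy
    rw [hS, Multiset.mem_toFinset, mem_roots hP0]
    simp only [hP, IsRoot.def, eval_sub, eval_pow, eval_X]
    rw [← map_pow, hq, FiniteField.pow_card, sub_self]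
  have hcardT : T.card = q := by
    rw [hT, Finset.card_image_of_injective _ (algebraMap F K).injective, Finset.card_univ, hq]
  have hcardS : S.card ≤ q := by
    calc S.card ≤ Multiset.card P.roots := Multiset.toFinset_card_le _
    _ ≤ P.natDegree := P.card_roots'
    _ = q := hdeg
  have hTS : T = S := Finset.eq_of_subset_of_card_le hsub (by omega)
  have hxS : x ∈ S := by
    rw [hS, Multiset.mem_toFinset, mem_roots hP0]
    simp only [hP, IsRoot.def, eval_sub, eval_pow, eval_X]
    rw [hx, sub_self]
  rw [← hTS, hT, Finset.mem_image] at hxS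
  obtain ⟨c, -, hc⟩ := hxS
  exact ⟨c, hc⟩

private theorem core (F K : Type*) [Field F] [Fintype F] [Field K] [Fintype K] [Algebra F K]
    (q n : ℕ) (hq : Fintype.card F = q) (hrank : Module.finrank F K = n) (hn : 2 ≤ n)
    (r : ℕ) (hr : r.Prime) (horder : orderOf (q : ZMod r) = n) :
    ∃ φ : Multiplicative (ZMod n) →* MulAut (Multiplicative (ZMod r)),
      Function.Injective φ ∧
      ∃ H : Subgroup (ProjectiveSpecialLinearGroup (Fin n) F),
        Nonempty (H ≃* (Multiplicative (ZMod r) ⋊[φ] Multiplicative (ZMod n))) := by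
  haveI := Classical.decEq K
  haveI := Classical.decEq F
  haveI : Fact r.Prime := ⟨hr⟩
  have hq2 : 1 < q := hq ▸ Fintype.one_lt_card
  have hqn1 : 1 ≤ q ^ n := Nat.one_le_pow _ _ (by omega)
  -- basic facts about q mod r
  have hqr : (q : ZMod r) ^ n = 1 := by rw [← horder]; exact pow_orderOf_eq_one _
  have hrdvd : r ∣ q ^ n - 1 := by
    have h1 : ((q ^ n - 1 : ℕ) : ZMod r) = 0 := by
      rw [Nat.cast_sub hqn1]
      push_cast
      rw [hqr, sub_self]
    exact (ZMod.natCast_eq_zero_iff _ _).mp h1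
  have hrq1 : ¬ r ∣ q - 1 := by
    intro hdvd
    have h1 : ((q - 1 : ℕ) : ZMod r) = 0 := (ZMod.natCast_eq_zero_iff _ _).mpr hdvd
    rw [Nat.cast_sub (by omega)] at h1
    push_cast at h1
    have h2 : (q : ZMod r) = 1 := by linear_combination h1
    rw [h2, orderOf_one] at horder
    omega
  -- the field extension
  have hKcard : Fintype.card K = q ^ n := by
    rw [Module.card_eq_pow_finrank (K := F) (V := K), hq, hrank]
  have hcardU : Fintype.card Kˣ = q ^ n - 1 := by rw [Fintype.card_units, hKcard]
  -- element of order r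
  obtain ⟨ζ, hζord⟩ := exists_prime_orderOf_dvd_card (G := Kˣ) r (by rw [hcardU]; exact hrdvd)
  set ζK : K := (ζ : K) with hζK
  have hζr : ζK ^ r = 1 := by
    rw [hζK, ← Units.val_pow_eq_pow_val, ← hζord, pow_orderOf_eq_one, Units.val_one]
  have hζ1 : ζK ≠ 1 := by
    intro h
    have : ζ = 1 := Units.ext h
    rw [this, orderOf_one] at hζord
    have := hr.two_le
    omega
  -- norm of ζ is 1
  have hNζ : Algebra.norm F ζK = 1 := by
    set u := Algebra.norm F ζK with hu
    have hur : u ^ r = 1 := by rw [hu, ← map_pow, hζr, _root_.map_one]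
    have hu0 : u ≠ 0 := by
      intro h
      rw [h, zero_pow hr.ne_zero] at hur
      exact zero_ne_one hur
    have huq : u ^ (q - 1) = 1 := by
      rw [← hq]
      exact FiniteField.pow_card_sub_one_eq_one u hu0
    have hd1 : orderOf u ∣ r := orderOf_dvd_of_pow_eq_one hur
    have hd2 : orderOf u ∣ q - 1 := orderOf_dvd_of_pow_eq_one huq
    have hcop : Nat.Coprime r (q - 1) := (Nat.Prime.coprime_iff_not_dvd hr).mpr hrq1
    have : orderOf u = 1 := Nat.dvd_one.mp (hcop ▸ Nat.dvd_gcd hd1 hd2)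
    rwa [orderOf_eq_one_iff] at this
  -- basis
  haveI : FiniteDimensional F K := Module.Finite.of_finite
  let b : Module.Basis (Fin n) F K := (Module.finBasis F K).reindex (finCongr hrank)
  -- the matrix A
  set A0 : Matrix (Fin n) (Fin n) F := Algebra.leftMulMatrix b ζK with hA0
  have hdetA : A0.det = 1 := by rw [hA0, ← Algebra.norm_eq_matrix_det b ζK, hNζ]
  set Asl : SpecialLinearGroup (Fin n) F := ⟨A0, hdetA⟩ with hAsl
  -- the Frobenius
  obtain ⟨p, hcharp⟩ := CharP.exists F
  haveI : CharP F p := hcharp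
  obtain ⟨m, hpprime, hcardFp⟩ := FiniteField.card F p
  haveI : Fact p.Prime := ⟨hpprime⟩
  have hqpm : q = p ^ (m : ℕ) := by rw [← hq, hcardFp]
  haveI : CharP K p := charP_of_injective_algebraMap (algebraMap F K).injective p
  set σR : K →+* K := iterateFrobenius K p (m : ℕ) with hσR
  have hσRval : ∀ x : K, σR x = x ^ q := by
    intro x
    rw [hσR, iterateFrobenius_def, ← hqpm]
  have hσcomm : ∀ (c : F) (x : K), σR (c • x) = c • σR x := by
    intro c x
    rw [Algebra.smul_def, Algebra.smul_def, _root_.map_mul]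
    congr 1
    rw [hσRval, ← map_pow]
    congr 1
    rw [← hq]
    exact FiniteField.pow_card c
  set σ : K →ₐ[F] K := AlgHom.mk' σR hσcomm with hσdef
  have hσval : ∀ x : K, σ x = x ^ q := hσRval
  have hσbij : Function.Bijective σ := Finite.injective_iff_bijective.mp σ.toRingHom.injective
  set σe : K ≃ₐ[F] K := AlgEquiv.ofBijective σ hσbij with hσe
  have hσeval : ∀ x : K, σe x = x ^ q := hσRval
  have hσepow : ∀ (i : ℕ) (x : K), (σe ^ i) x = x ^ q ^ i := by
    intro i
    induction i with
    | zero => intro x; simp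
    | succ i ih =>
      intro x
      rw [pow_succ', AlgEquiv.mul_apply, ih, hσeval, ← pow_mul, ← pow_succ]
  -- the Galois group is the powers of σe
  obtain ⟨g, hg⟩ := IsCyclic.exists_generator (α := Kˣ)
  have hgord : orderOf g = q ^ n - 1 := by
    rw [orderOf_eq_card_of_forall_mem_zpowers hg, Nat.card_eq_fintype_card, hcardU]
  set e : Fin n → (K ≃ₐ[F] K) := fun i => σe ^ (i : ℕ) with he
  have heinj : Function.Injective e := by
    intro i j hij
    have h1 : (g : K) ^ q ^ (i : ℕ) = (g : K) ^ q ^ (j : ℕ) := by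
      rw [← hσepow, ← hσepow]
      rw [he] at hij
      simp only at hij
      rw [hij]
    have h2 : g ^ q ^ (i : ℕ) = g ^ q ^ (j : ℕ) := by
      ext
      push_cast
      exact h1
    rw [pow_eq_pow_iff_modEq, hgord] at h2
    have hlt : ∀ k : Fin n, q ^ (k : ℕ) < q ^ n - 1 := by
      intro k
      have h3 : q ^ (k : ℕ) ≤ q ^ (n - 1) := Nat.pow_le_pow_right (by omega) (by omega)
      have h4 : q ^ (n - 1) * 2 ≤ q ^ (n - 1) * q := Nat.mul_le_mul_left _ hq2
      have h5 : q ^ (n - 1) * q = q ^ n := by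
        rw [← pow_succ]
        congr 1
        omega
      have h6 : 1 ≤ q ^ (n - 1) := Nat.one_le_pow _ _ (by omega)
      have h7 : q ≤ q ^ (n - 1) := Nat.le_self_pow (by omega) q
      omega
    have h6 : q ^ (i : ℕ) = q ^ (j : ℕ) := by
      have hi := Nat.mod_eq_of_lt (hlt i)
      have hj := Nat.mod_eq_of_lt (hlt j)
      rwa [Nat.ModEq, hi, hj] at h2
    have h7 : (i : ℕ) = (j : ℕ) := Nat.pow_right_injective hq2 h6
    exact Fin.ext h7
  have hcardaut : Fintype.card (K ≃ₐ[F] K) = n := by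
    rw [← Nat.card_eq_fintype_card, IsGalois.card_aut_eq_finrank F K, hrank]
  have hebij : Function.Bijective e :=
    (Fintype.bijective_iff_injective_and_card e).mpr ⟨heinj, by rw [Fintype.card_fin, hcardaut]⟩
  -- norm as power map
  set s : ℕ := ∑ i ∈ Finset.range n, q ^ i with hs
  have hnorm : ∀ x : K, algebraMap F K (Algebra.norm F x) = x ^ s := by
    intro x
    rw [Algebra.norm_eq_prod_automorphisms]
    have h1 : ∏ i : Fin n, x ^ q ^ (i : ℕ) = ∏ τ : K ≃ₐ[F] K, τ x :=
      Fintype.prod_bijective e hebij _ _ (fun i => (hσepow (i : ℕ) x).symm)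
    rw [← h1, Finset.prod_pow_eq_pow_sum, hs, Fin.sum_univ_eq_sum_range]
  have hgeom : (q - 1) * s = q ^ n - 1 := by
    have h1 : ((q : ℤ) - 1) * (s : ℤ) = (q : ℤ) ^ n - 1 := by
      rw [hs]
      push_cast
      rw [mul_comm]
      exact geom_sum_mul (q : ℤ) n
    have h2 : ((q - 1 : ℕ) : ℤ) * ((s : ℕ) : ℤ) = ((q ^ n - 1 : ℕ) : ℤ) := by
      rw [Nat.cast_sub (by omega), Nat.cast_sub hqn1]
      push_cast
      exact h1
    exact_mod_cast h2
  have hspos : 0 < s := by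
    rw [hs]
    apply Finset.sum_pos
    · intro i _
      exact pow_pos (by omega) _
    · exact ⟨0, Finset.mem_range.mpr (by omega)⟩
  have hsdvd : s ∣ q ^ n - 1 := ⟨q - 1, by rw [mul_comm]; exact hgeom.symm⟩
  -- order of norm of the generator
  set w0 : F := Algebra.norm F (g : K) with hw0
  have hw0map : algebraMap F K w0 = ((g ^ s : Kˣ) : K) := by
    rw [hw0, hnorm, Units.val_pow_eq_pow_val]
  have hordgs : orderOf (g ^ s : Kˣ) = q - 1 := by
    rw [orderOf_pow, hgord, Nat.gcd_eq_right hsdvd, ← hgeom, Nat.mul_div_cancel _ hspos]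
  have hw00 : w0 ≠ 0 := by
    intro h
    have h2 := hw0map
    rw [h, _root_.map_zero] at h2
    exact Units.ne_zero _ h2.symm
  set w : Fˣ := Units.mk0 w0 hw00 with hw
  have hordw : orderOf w = q - 1 := by
    have h1 : orderOf w = orderOf w0 := (orderOf_units (y := w)).symm
    have h2 : orderOf w0 = orderOf (algebraMap F K w0) :=
      (orderOf_injective ((algebraMap F K) : F →* K) (algebraMap F K).injective w0).symm
    have h3 : orderOf (algebraMap F K w0) = orderOf (g ^ s : Kˣ) := by
      rw [hw0map, orderOf_units]
    rw [h1, h2, h3, hordgs]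
  have hwtop : Subgroup.zpowers w = ⊤ := by
    apply Subgroup.eq_top_of_card_eq
    rw [Nat.card_zpowers, hordw, Nat.card_eq_fintype_card, Fintype.card_units, hq]
  -- determinant of Frobenius and choice of c
  set σlin : K →ₗ[F] K := σ.toLinearMap with hσlin
  set d : F := (LinearMap.toMatrix b b σlin).det with hd
  have hdu : IsUnit d := by
    have h1 : (σe.toLinearEquiv : K →ₗ[F] K) = σlin := rfl
    have := LinearEquiv.isUnit_det σe.toLinearEquiv b b
    rwa [h1] at this
  have hd0 : d ≠ 0 := hdu.ne_zero
  set v : Fˣ := (Units.mk0 d hd0)⁻¹ with hv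
  obtain ⟨k, hk⟩ : ∃ k : ℤ, w ^ k = v := by
    have h1 : v ∈ Subgroup.zpowers w := by rw [hwtop]; trivial
    exact Subgroup.mem_zpowers_iff.mp h1
  set cu : Kˣ := g ^ k with hcu
  set c : K := (cu : K) with hc
  have hc0 : c ≠ 0 := Units.ne_zero _
  have hnormc : Algebra.norm F c = d⁻¹ := by
    set nu : Kˣ →* Fˣ := Units.map (Algebra.norm F : K →* F) with hnu
    have h1 : nu g = w := by
      ext
      rfl
    have h2 : nu cu = v := by rw [hcu, map_zpow, h1, hk]
    have h3 : (nu cu : F) = Algebra.norm F c := rfl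
    rw [← h3, h2, hv, Units.val_inv_eq_inv_val, Units.val_mk0]
  -- the matrix B
  set mulc : K →ₗ[F] K := Algebra.lmul F K c with hmulc
  set βlin : K →ₗ[F] K := mulc ∘ₗ σlin with hβlin
  set Bmat : Matrix (Fin n) (Fin n) F := LinearMap.toMatrix b b βlin with hBmat
  have hdetB : Bmat.det = 1 := by
    rw [hBmat, hβlin, LinearMap.toMatrix_comp b b b, Matrix.det_mul]
    have h1 : LinearMap.toMatrix b b mulc = Algebra.leftMulMatrix b c := by
      rw [hmulc, Algebra.leftMulMatrix_apply]
    rw [h1, ← Algebra.norm_eq_matrix_det b c, hnormc, ← hd]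
    exact inv_mul_cancel₀ hd0
  set Bsl : SpecialLinearGroup (Fin n) F := ⟨Bmat, hdetB⟩ with hBsl
  -- the relation B A B⁻¹ = A^q
  have hlmrel : βlin ∘ₗ (Algebra.lmul F K ζK : K →ₗ[F] K)
      = (Algebra.lmul F K (ζK ^ q) : K →ₗ[F] K) ∘ₗ βlin := by
    apply LinearMap.ext
    intro x
    simp only [LinearMap.comp_apply, hβlin, hmulc]
    simp only [Algebra.lmul, AlgHom.coe_mk', Module.End.mul_apply]
    show c * σ (ζK * x) = ζK ^ q * (c * σ x)
    rw [_root_.map_mul, hσval, hσval]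
    ring
  have hBArel : Bsl * Asl = Asl ^ q * Bsl := by
    apply Subtype.ext
    rw [Matrix.SpecialLinearGroup.coe_mul, Matrix.SpecialLinearGroup.coe_mul,
      Matrix.SpecialLinearGroup.coe_pow]
    rw [hAsl, hBsl]
    show Bmat * A0 = A0 ^ q * Bmat
    have hA0q : A0 ^ q = Algebra.leftMulMatrix b (ζK ^ q) := by rw [hA0, ← map_pow]
    rw [hA0q, hA0, Algebra.leftMulMatrix_apply, Algebra.leftMulMatrix_apply, hBmat,
      ← LinearMap.toMatrix_comp b b b, ← LinearMap.toMatrix_comp b b b, hlmrel]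
  have hrel : Bsl * Asl * Bsl⁻¹ = Asl ^ q := by
    rw [hBArel]
    group
  -- A has order r and is nontrivial
  have hAr : Asl ^ r = 1 := by
    apply Subtype.ext
    rw [Matrix.SpecialLinearGroup.coe_pow]
    show A0 ^ r = 1
    rw [hA0, ← _root_.map_pow, hζr, _root_.map_one]
  have hA1 : Asl ≠ 1 := by
    intro h
    have h1 : A0 = 1 := congrArg Subtype.val h
    have h2 : A0 = Algebra.leftMulMatrix b 1 := by rw [_root_.map_one]; exact h1
    exact hζ1 (Algebra.leftMulMatrix_injective b (hA0 ▸ h2))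
  have hordA : orderOf Asl = r := orderOf_eq_prime hAr hA1
  -- B^n is central
  have hβx : ∀ y : K, βlin y = c * y ^ q := by
    intro y
    simp only [hβlin, hmulc, LinearMap.comp_apply]
    simp only [Algebra.lmul, AlgHom.coe_mk', Module.End.mul_apply]
    show c * σ y = c * y ^ q
    rw [hσval]
  have hβpow : ∀ (j : ℕ) (x : K),
      (βlin ^ j) x = c ^ (∑ i ∈ Finset.range j, q ^ i) * x ^ q ^ j := by
    intro j
    induction j with
    | zero => intro x; simp
    | succ j ih =>
      intro x
      rw [pow_succ', Module.End.mul_apply, ih, hβx, geom_sum_succ, pow_succ]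
      ring
  set e1 : K := c ^ (∑ i ∈ Finset.range n, q ^ i) with he1
  have he1q : e1 ^ q = e1 := by
    have hc1 : c ^ (q ^ n - 1) = 1 := by
      rw [hc, ← Units.val_pow_eq_pow_val, ← hcardU, pow_card_eq_one, Units.val_one]
    have hsq : s * q = (q ^ n - 1) + s := by
      have h8 : s * q = s * (q - 1) + s := by
        have hq1 : q - 1 + 1 = q := by omega
        calc s * q = s * ((q - 1) + 1) := by rw [hq1]
        _ = s * (q - 1) + s := by ring
      rw [h8, mul_comm s (q - 1), hgeom]
    rw [he1, ← hs, ← pow_mul, hsq, pow_add, hc1, one_mul]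
  obtain ⟨e0, he0⟩ := fixed_mem_range e1 (by rw [hq]; exact he1q)
  have hβn : (βlin ^ n) = (Algebra.lmul F K (algebraMap F K e0) : K →ₗ[F] K) := by
    apply LinearMap.ext
    intro x
    rw [hβpow n x]
    have hxq : x ^ q ^ n = x := by
      rw [← hKcard]
      exact FiniteField.pow_card x
    simp only [Algebra.lmul, AlgHom.coe_mk', Module.End.mul_apply]
    show c ^ (∑ i ∈ Finset.range n, q ^ i) * x ^ q ^ n = algebraMap F K e0 * x
    rw [hxq, he0, ← he1]
  have hBmatpow : ∀ j : ℕ, Bmat ^ j = LinearMap.toMatrix b b (βlin ^ j) := by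
    intro j
    induction j with
    | zero => simp
    | succ j ih =>
      rw [pow_succ, pow_succ, ih]
      have h9 : (βlin ^ j * βlin : K →ₗ[F] K) = (βlin ^ j) ∘ₗ βlin := rfl
      rw [h9, LinearMap.toMatrix_comp b b b]
  have hBmatn : Bmat ^ n = e0 • (1 : Matrix (Fin n) (Fin n) F) := by
    rw [hBmatpow n, hβn, ← Algebra.leftMulMatrix_apply, AlgHom.commutes,
      Algebra.algebraMap_eq_smul_one]
  have hBn : Bsl ^ n ∈ Subgroup.center (SpecialLinearGroup (Fin n) F) := by
    rw [Subgroup.mem_center_iff]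
    intro gsl
    apply Subtype.ext
    rw [Matrix.SpecialLinearGroup.coe_mul, Matrix.SpecialLinearGroup.coe_mul,
      Matrix.SpecialLinearGroup.coe_pow]
    show (gsl : Matrix (Fin n) (Fin n) F) * Bmat ^ n = Bmat ^ n * (gsl : Matrix (Fin n) (Fin n) F)
    rw [hBmatn, Matrix.mul_smul, Matrix.smul_mul, Matrix.mul_one, Matrix.one_mul]
  -- pass to PSL
  set π := QuotientGroup.mk' (Subgroup.center (SpecialLinearGroup (Fin n) F)) with hπ
  set abar := π Asl with habar
  set bbar := π Bsl with hbbar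
  have har : abar ^ r = 1 := by
    rw [habar, ← _root_.map_pow, hAr, _root_.map_one]
  have hbn : bbar ^ n = 1 := by
    rw [hbbar, ← _root_.map_pow]
    exact (QuotientGroup.eq_one_iff _).mpr hBn
  have hrelbar : bbar * abar * bbar⁻¹ = abar ^ q := by
    rw [habar, hbbar, ← _root_.map_inv, ← _root_.map_mul, ← _root_.map_mul, hrel, _root_.map_pow]
  have ha1 : abar ≠ 1 := by
    intro hone
    have hAc : Asl ∈ Subgroup.center (SpecialLinearGroup (Fin n) F) :=
      (QuotientGroup.eq_one_iff _).mp hone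
    have hcomm : Bsl * Asl = Asl * Bsl := Subgroup.mem_center_iff.mp hAc Bsl
    have hAq : Asl ^ q = Asl := by
      rw [← hrel, hcomm, mul_assoc, mul_inv_cancel, mul_one]
    have hAq1 : Asl ^ (q - 1) = 1 := by
      have h10 : Asl ^ (q - 1) * Asl = Asl ^ q := by
        rw [← pow_succ]
        congr 1
        omega
      rw [hAq] at h10
      have h11 : Asl ^ (q - 1) * Asl = 1 * Asl := by rw [h10, one_mul]
      exact mul_right_cancel h11
    have hdvd : r ∣ q - 1 := by
      rw [← hordA]
      exact orderOf_dvd_of_pow_eq_one hAq1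
    exact hrq1 hdvd
  exact frobenius_subgroup_abstract q n r hn hr horder abar bbar har ha1 hbn hrelbar

open Polynomial in
/-- **Frobenius subgroup in `L_n(q)`.** Let `F` be a finite field with
`|F| = q`, let `n ≥ 2`, and let `r` be a prime such that the multiplicative order of `q`
modulo `r` is `n` (a primitive prime divisor of `q^n - 1`).  Then
`L_n(q) = SL_n(F)/Z(SL_n(F))` contains a subgroup isomorphic to a Frobenius group
`(ℤ/rℤ) ⋊ (ℤ/nℤ)` with kernel of order `r`, cyclic complement of order `n`, and faithful
action. -/
theorem frobenius_subgroup_of_PSL (F : Type*) [Field F] [Fintype F] (q n : ℕ)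
    (hq : Fintype.card F = q) (hn : 2 ≤ n) (r : ℕ) (hr : r.Prime)
    (horder : orderOf (q : ZMod r) = n) :
    ∃ φ : Multiplicative (ZMod n) →* MulAut (Multiplicative (ZMod r)),
      Function.Injective φ ∧
      ∃ H : Subgroup (ProjectiveSpecialLinearGroup (Fin n) F),
        Nonempty (H ≃* (Multiplicative (ZMod r) ⋊[φ] Multiplicative (ZMod n))) := by
  obtain ⟨p, hp⟩ := CharP.exists F
  haveI : CharP F p := hp
  obtain ⟨m, hpprime, hcardF⟩ := FiniteField.card F p
  haveI : Fact p.Prime := ⟨hpprime⟩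
  set K := GaloisField p ((m : ℕ) * n) with hK
  haveI : Fintype K := Fintype.ofFinite K
  letI : Algebra (ZMod p) F := ZMod.algebra F p
  haveI : IsSplittingField (ZMod p) F (X ^ p ^ (m : ℕ) - X) :=
    FiniteField.isSplittingField_of_card_eq _ _ hcardF
  have hmn0 : (m : ℕ) * n ≠ 0 := by
    have := m.pos
    positivity
  -- divisibility of the splitting polynomials
  have hdvdpoly : (X ^ p ^ (m : ℕ) - X : (ZMod p)[X]) ∣ (X ^ p ^ ((m : ℕ) * n) - X) := by
    set a := p ^ (m : ℕ) - 1 with ha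
    set bb := p ^ ((m : ℕ) * n) - 1 with hbb
    have hp1 : 1 ≤ p ^ (m : ℕ) := Nat.one_le_pow _ _ hpprime.pos
    have hp2 : 1 ≤ p ^ ((m : ℕ) * n) := Nat.one_le_pow _ _ hpprime.pos
    have habdvd : a ∣ bb := by
      rw [ha, hbb, pow_mul]
      have := Nat.sub_dvd_pow_sub_pow (x := p ^ (m : ℕ)) (y := 1) (n := n)
      rwa [one_pow] at this
    have hfac1 : (X ^ p ^ (m : ℕ) - X : (ZMod p)[X]) = X * (X ^ a - 1) := by
      rw [mul_sub, mul_one, ← pow_succ', ha]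
      congr 2
      omega
    have hfac2 : (X ^ p ^ ((m : ℕ) * n) - X : (ZMod p)[X]) = X * (X ^ bb - 1) := by
      rw [mul_sub, mul_one, ← pow_succ', hbb]
      congr 2
      omega
    obtain ⟨t, ht⟩ := habdvd
    have hXab : (X ^ a - 1 : (ZMod p)[X]) ∣ (X ^ bb - 1) := by
      have h1 := sub_one_dvd_pow_sub_one (R := (ZMod p)[X]) (X ^ a) t
      rwa [← pow_mul, ← ht] at h1
    rw [hfac1, hfac2]
    exact mul_dvd_mul_left _ hXab
  have hbig0 : (X ^ p ^ ((m : ℕ) * n) - X : (ZMod p)[X]) ≠ 0 := by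
    intro h
    have h1 : (X ^ p ^ ((m : ℕ) * n) - X : (ZMod p)[X]).natDegree = p ^ ((m : ℕ) * n) :=
      FiniteField.X_pow_card_sub_X_natDegree_eq _
        (Nat.one_lt_pow hmn0 hpprime.one_lt)
    rw [h, natDegree_zero] at h1
    have := Nat.one_lt_pow hmn0 hpprime.one_lt
    omega
  have hsplitsK : Splits ((X ^ p ^ (m : ℕ) - X : (ZMod p)[X]).map (algebraMap (ZMod p) K)) := by
    have hbig : Splits ((X ^ p ^ ((m : ℕ) * n) - X : (ZMod p)[X]).map (algebraMap (ZMod p) K)) :=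
      SplittingField.splits (X ^ p ^ ((m : ℕ) * n) - X : (ZMod p)[X])
    exact hbig.of_dvd (Polynomial.map_ne_zero hbig0) (Polynomial.map_dvd _ hdvdpoly)
  letI emb : F →ₐ[ZMod p] K :=
    Polynomial.IsSplittingField.lift F (X ^ p ^ (m : ℕ) - X) hsplitsK
  letI : Algebra F K := (emb.toRingHom).toAlgebra
  haveI : FiniteDimensional F K := Module.Finite.of_finite
  have hcardK : Fintype.card K = p ^ ((m : ℕ) * n) := by
    rw [← Nat.card_eq_fintype_card, hK, GaloisField.card p _ hmn0]
  have hfinrank : Module.finrank F K = n := by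
    have h1 : Fintype.card K = Fintype.card F ^ Module.finrank F K :=
      Module.card_eq_pow_finrank (K := F) (V := K)
    rw [hcardK, hcardF, ← pow_mul] at h1
    have h2 : (m : ℕ) * n = (m : ℕ) * Module.finrank F K :=
      Nat.pow_right_injective hpprime.two_le h1
    exact (Nat.eq_of_mul_eq_mul_left m.pos h2).symm
  exact core F K q n hq hfinrank hn r hr horder
end

section
/- Let F be a finite field of order q and characteristic p, let n ≥ 4, and let L = L_n(q) = SL_n(F)/Z(SL_n(F)). Let r and s be distinct primes dividing |L|, both different from p, and let e(r,q) and e(s,q) denote the multiplicative orders of q modulo r and modulo s. If either (a) e(r,q) ≤ n/2 and e(s,q) ≤ n/2, or (b) e(r,q) = e(s,q), then L contains an element of order rs. -/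
open Matrix Polynomial

namespace AdjacencyPSLAux

lemma exists_orderOf_eq_of_dvd' {G : Type*} [Group G] [Finite G] [IsCyclic G] {d : ℕ}
    (hd : d ∣ Nat.card G) : ∃ g : G, orderOf g = d := by
  obtain ⟨g, hg⟩ := IsCyclic.exists_ofOrder_eq_natCard (α := G)
  refine ⟨g ^ (Nat.card G / d), ?_⟩
  rw [orderOf_pow, hg, Nat.gcd_eq_right (Nat.div_dvd_of_dvd hd),
    Nat.div_div_self hd Nat.card_pos.ne']

lemma X_pow_sub_X_dvd' {R : Type*} [CommRing R] {a b : ℕ} (ha : 1 ≤ a) (hb : 1 ≤ b)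
    (h : a - 1 ∣ b - 1) : (X ^ a - X : R[X]) ∣ X ^ b - X := by
  obtain ⟨k, hk⟩ := h
  have h1 : (X ^ (a - 1) - 1 : R[X]) ∣ X ^ (b - 1) - 1 := by
    have h2 := sub_dvd_pow_sub_pow ((X : R[X]) ^ (a - 1)) 1 k
    rwa [one_pow, ← pow_mul, ← hk] at h2
  have e1 : ∀ m : ℕ, 1 ≤ m → (X : R[X]) * (X ^ (m - 1) - 1) = X ^ m - X := by
    intro m hm
    rw [mul_sub, mul_one, ← pow_succ']
    congr 2
    omega
  rw [← e1 a ha, ← e1 b hb]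
  exact mul_dvd_mul_left _ h1

lemma exists_block {F : Type*} [Field F] [Fintype F] {q p : ℕ}
    (hq : Fintype.card F = q) (hp : p.Prime) (hchar : CharP F p)
    (m d : ℕ) (hm : 1 ≤ m) (hd0 : 0 < d) (hdvd : d ∣ q ^ m - 1)
    (hcop : Nat.Coprime d (q - 1)) :
    ∃ A : Matrix (Fin m) (Fin m) F, orderOf A = d ∧ A.det = 1 ∧
      ∀ (k : ℕ) (c : F), A ^ k = c • (1 : Matrix (Fin m) (Fin m) F) → d ∣ k * (q - 1) := by
  haveI : Fact p.Prime := ⟨hp⟩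
  obtain ⟨f, -, hqf⟩ := FiniteField.card F p
  letI : Algebra (ZMod p) F := ZMod.algebra F p
  have hq2 : 2 ≤ q := hq ▸ Fintype.one_lt_card
  have hfm : (f : ℕ) * m ≠ 0 := by
    have := f.pos
    positivity
  set K := GaloisField p ((f : ℕ) * m) with hK
  letI : Fintype K := Fintype.ofFinite K
  letI : DecidableEq K := Classical.decEq K
  have hcardK : Nat.card K = p ^ ((f : ℕ) * m) := GaloisField.card p _ hfm
  have hsMain : Splits ((X ^ (p ^ ((f : ℕ) * m)) - X : (ZMod p)[X]).map (algebraMap (ZMod p) K)) := by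
    have h := FiniteField.splits_X_pow_nat_card_sub_X (p := p) (K := K)
    rwa [hcardK] at h
  have hnat : p ^ (f : ℕ) - 1 ∣ p ^ ((f : ℕ) * m) - 1 := by
    have h := Nat.sub_dvd_pow_sub_pow (x := p ^ (f : ℕ)) (y := 1) (n := m)
    rwa [one_pow, ← pow_mul] at h
  have honep : ∀ j : ℕ, 1 ≤ p ^ j := fun j => Nat.one_le_pow _ _ hp.pos
  have hpolydvd : (X ^ (p ^ (f : ℕ)) - X : (ZMod p)[X]) ∣ X ^ (p ^ ((f : ℕ) * m)) - X :=
    X_pow_sub_X_dvd' (honep _) (honep _) hnat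
  have hsplits : Splits ((X ^ (p ^ (f : ℕ)) - X : (ZMod p)[X]).map (algebraMap (ZMod p) K)) :=
    hsMain.of_dvd
      (Polynomial.map_ne_zero (FiniteField.X_pow_card_pow_sub_X_ne_zero _ hfm hp.one_lt))
      (Polynomial.map_dvd _ hpolydvd)
  haveI : IsSplittingField (ZMod p) F (X ^ (p ^ (f : ℕ)) - X) := by
    rw [← hqf]
    infer_instance
  let emb : F →ₐ[ZMod p] K := IsSplittingField.lift F (X ^ (p ^ (f : ℕ)) - X) hsplits
  letI : Algebra F K := emb.toRingHom.toAlgebra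
  have hcardK' : Fintype.card K = q ^ m := by
    rw [← Nat.card_eq_fintype_card, hcardK, pow_mul, ← hqf, hq]
  have hrank : Module.finrank F K = m := by
    have h1 : Fintype.card K = Fintype.card F ^ Module.finrank F K := Module.card_eq_pow_finrank
    rw [hcardK', hq] at h1
    exact (Nat.pow_right_injective hq2 h1.symm)
  let b : Module.Basis (Fin m) F K := (Module.finBasis F K).reindex (finCongr hrank)
  let φ : K →ₐ[F] Matrix (Fin m) (Fin m) F :=
    (algEquivMatrix b).toAlgHom.comp (Algebra.lmul F K)
  have hφinj : Function.Injective φ := by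
    intro x y hxy
    have h2 : Algebra.lmul F K x = Algebra.lmul F K y :=
      (algEquivMatrix b).injective hxy
    simpa using congrArg (fun g => g 1) h2
  have hcardU : Nat.card Kˣ = q ^ m - 1 := by
    rw [Nat.card_eq_fintype_card, Fintype.card_units, hcardK']
  obtain ⟨u, hu⟩ := exists_orderOf_eq_of_dvd' (G := Kˣ) (hcardU ▸ hdvd)
  have hx : orderOf (u : K) = d := by rw [orderOf_units, hu]
  refine ⟨φ u, ?_, ?_, ?_⟩
  · exact (orderOf_injective (MonoidHomClass.toMonoidHom φ) hφinj (u : K)).trans hx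
  · set c := (φ (u : K)).det with hc
    have hcd : c ^ d = 1 := by
      rw [hc, ← det_pow, ← map_pow, ← hx, pow_orderOf_eq_one, _root_.map_one, det_one]
    have hc0 : c ≠ 0 := by
      intro h
      rw [h, zero_pow hd0.ne'] at hcd
      exact zero_ne_one hcd
    have hcq : c ^ (q - 1) = 1 := by
      rw [← hq]
      exact FiniteField.pow_card_sub_one_eq_one c hc0
    have h5 : orderOf c ∣ Nat.gcd d (q - 1) :=
      Nat.dvd_gcd (orderOf_dvd_of_pow_eq_one hcd) (orderOf_dvd_of_pow_eq_one hcq)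
    rw [Nat.Coprime.gcd_eq_one hcop, Nat.dvd_one] at h5
    exact orderOf_eq_one_iff.mp h5
  · intro k c hk
    have h6 : φ ((u : K) ^ k) = φ (algebraMap F K c) := by
      rw [map_pow, hk, AlgHom.commutes, Algebra.algebraMap_eq_smul_one]
    have h7 : (u : K) ^ k = algebraMap F K c := hφinj h6
    have hc0 : c ≠ 0 := by
      intro h
      rw [h, map_zero] at h7
      exact (pow_ne_zero k (Units.ne_zero u)) h7
    have hcq : c ^ (q - 1) = 1 := by
      rw [← hq]
      exact FiniteField.pow_card_sub_one_eq_one c hc0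
    have h8 : (u : K) ^ (k * (q - 1)) = 1 := by
      rw [pow_mul, h7, ← map_pow, hcq, _root_.map_one]
    exact hx ▸ orderOf_dvd_of_pow_eq_one h8

lemma exists_pair {F : Type*} [Field F] [Fintype F] {q : ℕ} (hq : Fintype.card F = q)
    {t : ℕ} (ht : t ∣ q - 1) :
    ∃ A : Matrix (Fin 2) (Fin 2) F, orderOf A = t ∧ A.det = 1 := by
  classical
  have hcard : Nat.card Fˣ = q - 1 := by
    rw [Nat.card_eq_fintype_card, Fintype.card_units, hq]
  obtain ⟨u, hu⟩ := exists_orderOf_eq_of_dvd' (G := Fˣ) (hcard ▸ ht)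
  have hvpow : (![(u : F), (u : F)⁻¹] : Fin 2 → F) ^ t = 1 := by
    funext i
    fin_cases i <;>
      simp [Pi.pow_apply, inv_pow, ← Units.val_pow_eq_pow_val, ← hu, pow_orderOf_eq_one]
  refine ⟨diagonal ![(u : F), (u : F)⁻¹], ?_, ?_⟩
  · apply Nat.dvd_antisymm
    · apply orderOf_dvd_of_pow_eq_one
      rw [diagonal_pow, hvpow]
      exact diagonal_one
    · rw [← hu]
      apply orderOf_dvd_of_pow_eq_one
      have h1 := pow_orderOf_eq_one (diagonal ![(u : F), (u : F)⁻¹])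
      rw [diagonal_pow] at h1
      have h0 := congrFun (congrFun h1 0) 0
      simp [Pi.pow_apply, diagonal_apply_eq, Matrix.one_apply_eq] at h0
      rw [← Units.val_pow_eq_pow_val] at h0
      exact Units.val_eq_one.mp h0
  · simp [det_diagonal, Fin.prod_univ_two, mul_inv_cancel₀ (Units.ne_zero u)]

lemma fromBlocks_diag_pow {R : Type*} [Semiring R] {α β : Type*} [Fintype α] [Fintype β]
    [DecidableEq α] [DecidableEq β]
    (A : Matrix α α R) (B : Matrix β β R) (k : ℕ) :
    (fromBlocks A 0 0 B) ^ k = fromBlocks (A ^ k) 0 0 (B ^ k) := by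
  induction k with
  | zero => simpa using fromBlocks_one.symm
  | succ k ih =>
      rw [pow_succ, pow_succ, pow_succ, ih, fromBlocks_multiply]
      simp

lemma assemble {F : Type*} [CommRing F] {n : ℕ} (a b : ℕ) (hab : a + b ≤ n)
    (A : Matrix (Fin a) (Fin a) F) (B : Matrix (Fin b) (Fin b) F) :
    ∃ M : Matrix (Fin n) (Fin n) F,
      M.det = A.det * B.det ∧
      (∀ k : ℕ, M ^ k = 1 ↔ A ^ k = 1 ∧ B ^ k = 1) ∧
      (∀ (k : ℕ) (c : F), M ^ k = c • 1 → A ^ k = c • 1 ∧ B ^ k = c • 1) := by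
  let e : ((Fin a ⊕ Fin b) ⊕ Fin (n - (a + b))) ≃ Fin n :=
    ((finSumFinEquiv.sumCongr (Equiv.refl (Fin (n - (a + b))))).trans finSumFinEquiv).trans
      (finCongr (by omega))
  let ψ := reindexAlgEquiv F F e
  set N : Matrix ((Fin a ⊕ Fin b) ⊕ Fin (n - (a + b)))
      ((Fin a ⊕ Fin b) ⊕ Fin (n - (a + b))) F :=
    fromBlocks (fromBlocks A 0 0 B) 0 0 1 with hN
  have hNpow : ∀ k : ℕ, N ^ k = fromBlocks (fromBlocks (A ^ k) 0 0 (B ^ k)) 0 0 1 := by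
    intro k
    rw [hN, fromBlocks_diag_pow, fromBlocks_diag_pow, one_pow]
  have h1big : (1 : Matrix ((Fin a ⊕ Fin b) ⊕ Fin (n - (a + b)))
      ((Fin a ⊕ Fin b) ⊕ Fin (n - (a + b))) F) = fromBlocks 1 0 0 1 := fromBlocks_one.symm
  have h1mid : (1 : Matrix (Fin a ⊕ Fin b) (Fin a ⊕ Fin b) F) = fromBlocks 1 0 0 1 :=
    fromBlocks_one.symm
  refine ⟨ψ N, ?_, ?_, ?_⟩
  · show (reindex e e N).det = _
    rw [det_reindex_self, hN, det_fromBlocks_zero₂₁, det_fromBlocks_zero₂₁, det_one, mul_one]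
  · intro k
    rw [← map_pow, ← _root_.map_one ψ, Function.Injective.eq_iff (EquivLike.injective ψ),
      hNpow, h1big, fromBlocks_inj, h1mid, fromBlocks_inj]
    constructor
    · rintro ⟨⟨h1, -, -, h2⟩, -⟩
      exact ⟨h1, h2⟩
    · rintro ⟨h1, h2⟩
      exact ⟨⟨h1, rfl, rfl, h2⟩, rfl, rfl, rfl⟩
  · intro k c h
    have h1 : N ^ k = c • 1 := by
      apply EquivLike.injective ψ
      rw [map_pow, h, _root_.map_smul, _root_.map_one]
    rw [hNpow, h1big, fromBlocks_smul, smul_zero, fromBlocks_inj] at h1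
    obtain ⟨h2, -, -, -⟩ := h1
    rw [h1mid, fromBlocks_smul, smul_zero, fromBlocks_inj] at h2
    exact ⟨h2.1, h2.2.2.2⟩

lemma glue {F : Type*} [CommRing F] {n a b r s : ℕ} (hab : a + b ≤ n)
    (ha : 0 < a) (hb : 0 < b) (hr : r.Prime) (hs : s.Prime) (hrs : r ≠ s)
    (A : Matrix (Fin a) (Fin a) F) (B : Matrix (Fin b) (Fin b) F)
    (hAo : orderOf A = r) (hBo : orderOf B = s) (hAd : A.det = 1) (hBd : B.det = 1) :
    ∃ M : Matrix (Fin n) (Fin n) F, M.det = 1 ∧ orderOf M = r * s ∧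
      (∀ c : F, M ^ r = c • 1 → False) ∧ (∀ c : F, M ^ s = c • 1 → False) := by
  obtain ⟨M, hMdet, hMpow, hMs⟩ := assemble a b hab A B
  have hco : Nat.Coprime r s := (Nat.coprime_primes hr hs).mpr hrs
  have hA1 : A ^ r = 1 := by rw [← hAo]; exact pow_orderOf_eq_one A
  have hB1 : B ^ s = 1 := by rw [← hBo]; exact pow_orderOf_eq_one B
  refine ⟨M, by rw [hMdet, hAd, hBd, one_mul], ?_, ?_, ?_⟩
  · apply Nat.dvd_antisymm
    · apply orderOf_dvd_of_pow_eq_one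
      rw [hMpow]
      constructor
      · rw [pow_mul, hA1, one_pow]
      · rw [mul_comm, pow_mul, hB1, one_pow]
    · have h1 := (hMpow (orderOf M)).mp (pow_orderOf_eq_one M)
      rw [← hco.lcm_eq_mul]
      exact Nat.lcm_dvd (hAo ▸ orderOf_dvd_of_pow_eq_one h1.1)
        (hBo ▸ orderOf_dvd_of_pow_eq_one h1.2)
  · intro c hc
    obtain ⟨h1, h2⟩ := hMs r c hc
    rw [hA1] at h1
    have hc1 : c = 1 := by
      have h3 := congrFun (congrFun h1 ⟨0, ha⟩) ⟨0, ha⟩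
      simpa using h3.symm
    rw [hc1, one_smul] at h2
    have h4 : s ∣ r := hBo ▸ orderOf_dvd_of_pow_eq_one h2
    exact hrs ((Nat.prime_dvd_prime_iff_eq hs hr).mp h4).symm
  · intro c hc
    obtain ⟨h1, h2⟩ := hMs s c hc
    rw [hB1] at h2
    have hc1 : c = 1 := by
      have h3 := congrFun (congrFun h2 ⟨0, hb⟩) ⟨0, hb⟩
      simpa using h3.symm
    rw [hc1, one_smul] at h1
    have h4 : r ∣ s := hAo ▸ orderOf_dvd_of_pow_eq_one h1
    exact hrs ((Nat.prime_dvd_prime_iff_eq hr hs).mp h4)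

lemma exists_dvd_pow_sub_one {F : Type*} [Field F] [Fintype F] {q p n r : ℕ}
    (hq : Fintype.card F = q) (hp : p.Prime) (hchar : CharP F p) (hr : r.Prime) (hrp : r ≠ p)
    (hrL : r ∣ Nat.card (Matrix.ProjectiveSpecialLinearGroup (Fin n) F)) :
    ∃ k, 1 ≤ k ∧ k ≤ n ∧ r ∣ q ^ k - 1 := by
  haveI : Fact p.Prime := ⟨hp⟩
  have h1 : r ∣ Nat.card (SpecialLinearGroup (Fin n) F) :=
    hrL.trans (Subgroup.card_quotient_dvd_card _)
  have h2 : r ∣ Nat.card (GL (Fin n) F) :=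
    h1.trans (Subgroup.card_dvd_of_injective Matrix.SpecialLinearGroup.toGL
      (fun A B hAB => Subtype.coe_injective (congrArg Units.val hAB)))
  rw [Matrix.card_GL_field, hq] at h2
  obtain ⟨i, -, hi⟩ := (hr.prime.dvd_finset_prod_iff _).mp h2
  have hin : (i : ℕ) < n := i.isLt
  have hqpow : q ^ n - q ^ (i : ℕ) = q ^ (i : ℕ) * (q ^ (n - (i : ℕ)) - 1) := by
    rw [Nat.mul_sub, mul_one, ← pow_add]
    congr 2
    omega
  rw [hqpow] at hi
  rcases (Nat.Prime.dvd_mul hr).mp hi with h3 | h3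
  · exfalso
    obtain ⟨f, -, hqf⟩ := FiniteField.card F p
    have h4 : r ∣ p ^ ((f : ℕ) * (i : ℕ)) := by
      rw [pow_mul, ← hqf, hq]
      exact h3
    exact hrp ((Nat.prime_dvd_prime_iff_eq hr hp).mp (hr.dvd_of_dvd_pow h4))
  · exact ⟨n - (i : ℕ), by omega, by omega, h3⟩

lemma zmod_facts {q r k : ℕ} (hr : r.Prime) (hq2 : 2 ≤ q) (hk : 1 ≤ k) (hdvd : r ∣ q ^ k - 1) :
    0 < orderOf (q : ZMod r) ∧ orderOf (q : ZMod r) ≤ k ∧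
      r ∣ q ^ orderOf (q : ZMod r) - 1 ∧ (orderOf (q : ZMod r) = 1 ↔ r ∣ q - 1) := by
  have key : ∀ m : ℕ, ((q : ZMod r) ^ m = 1 ↔ r ∣ q ^ m - 1) := by
    intro m
    have h1 : 1 ≤ q ^ m := Nat.one_le_pow _ _ (by omega)
    rw [← ZMod.natCast_eq_zero_iff, Nat.cast_sub h1]
    push_cast
    rw [sub_eq_zero, eq_comm]
  have hpow : (q : ZMod r) ^ k = 1 := (key k).mpr hdvd
  have horddvd : orderOf (q : ZMod r) ∣ k := orderOf_dvd_of_pow_eq_one hpow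
  have hpos : 0 < orderOf (q : ZMod r) := by
    rcases Nat.eq_zero_or_pos (orderOf (q : ZMod r)) with h0 | h0
    · rw [h0] at horddvd; omega
    · exact h0
  refine ⟨hpos, Nat.le_of_dvd (by omega) horddvd, (key _).mp (pow_orderOf_eq_one _), ?_⟩
  rw [orderOf_eq_one_iff]
  have h2 := key 1
  rw [pow_one, pow_one] at h2
  exact h2

end AdjacencyPSLAux

open AdjacencyPSLAux

/-- **Vasil'ev–Vdovin adjacency criterion for linear groups.** Let `F` be a
finite field of order `q` and characteristic `p`, let `n ≥ 4`, and
`L = L_n(q) = SL_n(F)/Z(SL_n(F))`.  If `r, s` are distinct primes dividing `|L|`, both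
different from `p`, and either `e(r,q) ≤ n/2` and `e(s,q) ≤ n/2`, or `e(r,q) = e(s,q)`, then
`L` contains an element of order `rs`. -/
theorem adjacency_in_PSL (F : Type*) [Field F] [Fintype F] (q p : ℕ)
    (hq : Fintype.card F = q) (hp : p.Prime) (hchar : CharP F p)
    (n : ℕ) (hn : 4 ≤ n) (r s : ℕ) (hr : r.Prime) (hs : s.Prime) (hrs : r ≠ s)
    (hrL : r ∣ Nat.card (ProjectiveSpecialLinearGroup (Fin n) F))
    (hsL : s ∣ Nat.card (ProjectiveSpecialLinearGroup (Fin n) F))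
    (hrp : r ≠ p) (hsp : s ≠ p)
    (h : (orderOf (q : ZMod r) ≤ n / 2 ∧ orderOf (q : ZMod s) ≤ n / 2) ∨
      orderOf (q : ZMod r) = orderOf (q : ZMod s)) :
    ∃ x : ProjectiveSpecialLinearGroup (Fin n) F, orderOf x = r * s := by
  have hq2 : 2 ≤ q := hq ▸ Fintype.one_lt_card
  have hco : Nat.Coprime r s := (Nat.coprime_primes hr hs).mpr hrs
  obtain ⟨kr, hkr1, hkrn, hkr⟩ := exists_dvd_pow_sub_one hq hp hchar hr hrp hrL
  obtain ⟨ks, hks1, hksn, hks⟩ := exists_dvd_pow_sub_one hq hp hchar hs hsp hsL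
  obtain ⟨herpos, herle, herdvd, heriff⟩ := zmod_facts hr hq2 hkr1 hkr
  obtain ⟨hespos, hesle, hesdvd, hesiff⟩ := zmod_facts hs hq2 hks1 hks
  set er := orderOf (q : ZMod r) with her
  set es := orderOf (q : ZMod s) with hes
  have her_n : er ≤ n := herle.trans hkrn
  have hes_n : es ≤ n := hesle.trans hksn
  have key : ∃ M : Matrix (Fin n) (Fin n) F, M.det = 1 ∧ orderOf M = r * s ∧
      (∀ c : F, M ^ r = c • (1 : Matrix (Fin n) (Fin n) F) → False) ∧
      (∀ c : F, M ^ s = c • (1 : Matrix (Fin n) (Fin n) F) → False) := by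
    by_cases h1 : er = 1 <;> by_cases h2 : es = 1
    · obtain ⟨A, hAo, hAd⟩ := exists_pair hq (heriff.mp h1)
      obtain ⟨B, hBo, hBd⟩ := exists_pair hq (hesiff.mp h2)
      exact glue (by omega) (by omega) (by omega) hr hs hrs A B hAo hBo hAd hBd
    · have hesle2 : es ≤ n / 2 := by
        rcases h with ⟨-, h'⟩ | h'
        · exact h'
        · omega
      have hcop : Nat.Coprime s (q - 1) :=
        (Nat.Prime.coprime_iff_not_dvd hs).mpr (fun hd => h2 (hesiff.mpr hd))
      obtain ⟨A, hAo, hAd⟩ := exists_pair hq (heriff.mp h1)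
      obtain ⟨B, hBo, hBd, -⟩ := exists_block hq hp hchar es s (by omega) hs.pos hesdvd hcop
      exact glue (by omega) (by omega) (by omega) hr hs hrs A B hAo hBo hAd hBd
    · have herle2 : er ≤ n / 2 := by
        rcases h with ⟨h', -⟩ | h'
        · exact h'
        · omega
      have hcop : Nat.Coprime r (q - 1) :=
        (Nat.Prime.coprime_iff_not_dvd hr).mpr (fun hd => h1 (heriff.mpr hd))
      obtain ⟨A, hAo, hAd, -⟩ := exists_block hq hp hchar er r (by omega) hr.pos herdvd hcop
      obtain ⟨B, hBo, hBd⟩ := exists_pair hq (hesiff.mp h2)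
      exact glue (by omega) (by omega) (by omega) hr hs hrs A B hAo hBo hAd hBd
    · have hcopr : Nat.Coprime r (q - 1) :=
        (Nat.Prime.coprime_iff_not_dvd hr).mpr (fun hd => h1 (heriff.mpr hd))
      have hcops : Nat.Coprime s (q - 1) :=
        (Nat.Prime.coprime_iff_not_dvd hs).mpr (fun hd => h2 (hesiff.mpr hd))
      by_cases h3 : er = es
      · have hdvd_rs : r * s ∣ q ^ er - 1 :=
          hco.mul_dvd_of_dvd_of_dvd herdvd (h3 ▸ hesdvd)
        obtain ⟨A, hAo, hAd, hAs⟩ := exists_block hq hp hchar er (r * s) (by omega)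
          (Nat.mul_pos hr.pos hs.pos) hdvd_rs (Nat.Coprime.mul hcopr hcops)
        obtain ⟨M, hMdet, hMpow, hMsc⟩ := assemble (F := F) (n := n) er 0 (by omega) A
          (1 : Matrix (Fin 0) (Fin 0) F)
        refine ⟨M, by rw [hMdet, hAd, det_one, mul_one], ?_, ?_, ?_⟩
        · apply Nat.dvd_antisymm
          · apply orderOf_dvd_of_pow_eq_one
            rw [hMpow]
            exact ⟨by rw [← hAo]; exact pow_orderOf_eq_one A, one_pow _⟩
          · have h4 := (hMpow (orderOf M)).mp (pow_orderOf_eq_one M)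
            exact hAo ▸ orderOf_dvd_of_pow_eq_one h4.1
        · intro c hc
          have h5 := hAs r c (hMsc r c hc).1
          rw [mul_dvd_mul_iff_left hr.pos.ne'] at h5
          exact h2 (hesiff.mpr h5)
        · intro c hc
          have h5 := hAs s c (hMsc s c hc).1
          rw [mul_comm r s, mul_dvd_mul_iff_left hs.pos.ne'] at h5
          exact h1 (heriff.mpr h5)
      · have hle : er ≤ n / 2 ∧ es ≤ n / 2 := by
          rcases h with h' | h'
          · exact h'
          · exact absurd h' h3
        obtain ⟨A, hAo, hAd, -⟩ := exists_block hq hp hchar er r (by omega) hr.pos herdvd hcopr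
        obtain ⟨B, hBo, hBd, -⟩ := exists_block hq hp hchar es s (by omega) hs.pos hesdvd hcops
        exact glue (by omega) (by omega) (by omega) hr hs hrs A B hAo hBo hAd hBd
  obtain ⟨M, hMdet, hMord, hMr, hMs⟩ := key
  let g : SpecialLinearGroup (Fin n) F := ⟨M, hMdet⟩
  let coeHom : SpecialLinearGroup (Fin n) F →* Matrix (Fin n) (Fin n) F :=
    { toFun := fun h => (h : Matrix (Fin n) (Fin n) F),
      map_one' := rfl,
      map_mul' := fun x y => rfl }
  have hgo : orderOf g = r * s := by
    rw [← orderOf_injective coeHom Subtype.coe_injective g]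
    exact hMord
  refine ⟨QuotientGroup.mk' (Subgroup.center (SpecialLinearGroup (Fin n) F)) g, ?_⟩
  set d := orderOf (QuotientGroup.mk' (Subgroup.center (SpecialLinearGroup (Fin n) F)) g) with hd
  have hdvd : d ∣ r * s := hgo ▸ orderOf_map_dvd _ g
  have hcenter : ∀ k : ℕ, g ^ k ∈ Subgroup.center (SpecialLinearGroup (Fin n) F) →
      ∃ c : F, M ^ k = c • (1 : Matrix (Fin n) (Fin n) F) := by
    intro k hk
    obtain ⟨c, -, hc⟩ := Matrix.SpecialLinearGroup.mem_center_iff.mp hk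
    refine ⟨c, ?_⟩
    have hc2 : scalar (Fin n) c = (g : Matrix (Fin n) (Fin n) F) ^ k := by
      rw [← Matrix.SpecialLinearGroup.coe_pow]
      exact hc
    rw [show M = (g : Matrix (Fin n) (Fin n) F) from rfl, ← hc2, scalar_apply,
      smul_one_eq_diagonal]
  have hnr : ¬ d ∣ r := by
    intro hdr
    have h3 : (QuotientGroup.mk' (Subgroup.center (SpecialLinearGroup (Fin n) F)) g) ^ r = 1 :=
      orderOf_dvd_iff_pow_eq_one.mp hdr
    rw [← map_pow] at h3
    obtain ⟨c, hc⟩ := hcenter r ((QuotientGroup.eq_one_iff _).mp h3)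
    exact hMr c hc
  have hns : ¬ d ∣ s := by
    intro hds
    have h3 : (QuotientGroup.mk' (Subgroup.center (SpecialLinearGroup (Fin n) F)) g) ^ s = 1 :=
      orderOf_dvd_iff_pow_eq_one.mp hds
    rw [← map_pow] at h3
    obtain ⟨c, hc⟩ := hcenter s ((QuotientGroup.eq_one_iff _).mp h3)
    exact hMs c hc
  have h5 : r ∣ d := by
    by_contra h6
    exact hns ((((Nat.Prime.coprime_iff_not_dvd hr).mpr h6).symm).dvd_of_dvd_mul_left hdvd)
  have h7 : s ∣ d := by
    by_contra h6
    exact hnr ((((Nat.Prime.coprime_iff_not_dvd hs).mpr h6).symm).dvd_of_dvd_mul_right hdvd)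
  exact Nat.dvd_antisymm hdvd (hco.mul_dvd_of_dvd_of_dvd h5 h7)
end
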